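/- arXiv:1307.5018 — 4 statements merged into one kernel-verified Lean document; each statement's English description precedes it below -/
import Mathlib

section
/- For any two 2-forms A and B on a 4-dimensional Lorentzian vector space, A_{αβ}B_{μν} + B*_{αβ}A*_{μν} = L_{μα}g_{βν} - L_{να}g_{βμ} - L_{μβ}g_{αν} + L_{νβ}g_{αμ}, where L_{μν} := B_μ{}^ρ A_{νρ} - (1/4) g_{μν} B^{ρσ}A_{ρσ} and * denotes the Hodge dual of a 2-form. -/
open Finset Complex

noncomputable section

/-- The Minkowski metric of signature (-,+,+,+) in an orthonormal basis,
    viewed as a complex-valued bilinear form. -/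
def gm (μ ν : Fin 4) : ℂ := if μ = ν then (if μ = 0 then -1 else 1) else 0

/-- The totally antisymmetric Levi-Civita symbol (volume form, lower indices)
    with `eps 0 1 2 3 = 1`, compatible with the Minkowski metric. -/
def eps (a b c d : Fin 4) : ℂ :=
  ((b.val : ℂ) - (a.val : ℂ)) * ((c.val : ℂ) - (a.val : ℂ)) * ((d.val : ℂ) - (a.val : ℂ)) *
    ((c.val : ℂ) - (b.val : ℂ)) * ((d.val : ℂ) - (b.val : ℂ)) * ((d.val : ℂ) - (c.val : ℂ)) / 12

/-- Raise both indices of a 2-form with the (inverse) Minkowski metric. -/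
def up2 (F : Fin 4 → Fin 4 → ℂ) : Fin 4 → Fin 4 → ℂ :=
  fun μ ν => ∑ α, ∑ β, gm μ α * gm ν β * F α β

/-- Raise the index of a covector / lower the index of a vector. -/
def upv (v : Fin 4 → ℂ) : Fin 4 → ℂ := fun μ => ∑ ν, gm μ ν * v ν

/-- Lower the index of a real vector, giving a complex covector. -/
def lo (v : Fin 4 → ℝ) : Fin 4 → ℂ := fun μ => ∑ ν, gm μ ν * (v ν : ℂ)

/-- Hodge dual of a (complex) 2-form: `(F*)_{μν} = (1/2) η_{μνρσ} F^{ρσ}`. -/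
def hodge (F : Fin 4 → Fin 4 → ℂ) : Fin 4 → Fin 4 → ℂ :=
  fun μ ν => (1/2) * ∑ ρ, ∑ σ, eps μ ν ρ σ * up2 F ρ σ

/-- The scalar `F² = F_{αβ} F^{αβ}`. -/
def sq2 (F : Fin 4 → Fin 4 → ℂ) : ℂ := ∑ μ, ∑ ν, F μ ν * up2 F μ ν

/-- Componentwise complex conjugate of a 2-form. -/
def conj2 (F : Fin 4 → Fin 4 → ℂ) : Fin 4 → Fin 4 → ℂ := fun μ ν => (starRingEnd ℂ) (F μ ν)

/-- A self-dual complex 2-form: antisymmetric and `F* = -i F`. -/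
def SelfDual (F : Fin 4 → Fin 4 → ℂ) : Prop :=
  (∀ μ ν, F ν μ = - F μ ν) ∧ ∀ μ ν, hodge F μ ν = -Complex.I * F μ ν

/-- The Ernst covector `χ_β = 2 ξ^α F_{αβ}` of a vector `ξ` and a 2-form `F`. -/
def chiOf (F : Fin 4 → Fin 4 → ℂ) (ξ : Fin 4 → ℝ) : Fin 4 → ℂ :=
  fun β => 2 * ∑ α, (ξ α : ℂ) * F α β

/-- The norm `N = -g(ξ,ξ)`. -/
def normOf (ξ : Fin 4 → ℝ) : ℂ := -∑ μ, ∑ ν, gm μ ν * (ξ μ : ℂ) * (ξ ν : ℂ)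

/-- The real covector `η_μ = \bar χ^ρ F_{ρμ}`. -/
def etaOf (F : Fin 4 → Fin 4 → ℂ) (ξ : Fin 4 → ℝ) : Fin 4 → ℂ :=
  fun μ => ∑ ρ, upv (fun α => (starRingEnd ℂ) (chiOf F ξ α)) ρ * F ρ μ

/-- The "energy-momentum" tensor `t_{μν} = (1/2) F_{μρ} \bar F_ν{}^ρ`. -/
def tOf (F : Fin 4 → Fin 4 → ℂ) : Fin 4 → Fin 4 → ℂ :=
  fun μ ν => (1/2) * ∑ ρ, F μ ρ * (∑ σ, gm ρ σ * (starRingEnd ℂ) (F ν σ))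

end

lemma hodge_00 (F : Fin 4 → Fin 4 → ℂ) : hodge F 0 0 = 0 := by
  simp only [hodge, up2, Fin.sum_univ_four, eps, gm, Fin.isValue]
  norm_num [show ((0:Fin 4).val) = 0 from rfl, show ((1:Fin 4).val) = 1 from rfl,
    show ((2:Fin 4).val) = 2 from rfl, show ((3:Fin 4).val) = 3 from rfl,
    show (1:Fin 4) ≠ 0 by decide, show (2:Fin 4) ≠ 0 by decide, show (3:Fin 4) ≠ 0 by decide,
    show (2:Fin 4) ≠ 1 by decide, show (3:Fin 4) ≠ 1 by decide, show (3:Fin 4) ≠ 2 by decide,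
    show (0:Fin 4) ≠ 1 by decide, show (0:Fin 4) ≠ 2 by decide, show (0:Fin 4) ≠ 3 by decide,
    show (1:Fin 4) ≠ 2 by decide, show (1:Fin 4) ≠ 3 by decide, show (2:Fin 4) ≠ 3 by decide]
  try ring

lemma hodge_01 (F : Fin 4 → Fin 4 → ℂ) : hodge F 0 1 = (F 2 3 - F 3 2)/2 := by
  simp only [hodge, up2, Fin.sum_univ_four, eps, gm, Fin.isValue]
  norm_num [show ((0:Fin 4).val) = 0 from rfl, show ((1:Fin 4).val) = 1 from rfl,
    show ((2:Fin 4).val) = 2 from rfl, show ((3:Fin 4).val) = 3 from rfl,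
    show (1:Fin 4) ≠ 0 by decide, show (2:Fin 4) ≠ 0 by decide, show (3:Fin 4) ≠ 0 by decide,
    show (2:Fin 4) ≠ 1 by decide, show (3:Fin 4) ≠ 1 by decide, show (3:Fin 4) ≠ 2 by decide,
    show (0:Fin 4) ≠ 1 by decide, show (0:Fin 4) ≠ 2 by decide, show (0:Fin 4) ≠ 3 by decide,
    show (1:Fin 4) ≠ 2 by decide, show (1:Fin 4) ≠ 3 by decide, show (2:Fin 4) ≠ 3 by decide]
  try ring

lemma hodge_02 (F : Fin 4 → Fin 4 → ℂ) : hodge F 0 2 = (F 3 1 - F 1 3)/2 := by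
  simp only [hodge, up2, Fin.sum_univ_four, eps, gm, Fin.isValue]
  norm_num [show ((0:Fin 4).val) = 0 from rfl, show ((1:Fin 4).val) = 1 from rfl,
    show ((2:Fin 4).val) = 2 from rfl, show ((3:Fin 4).val) = 3 from rfl,
    show (1:Fin 4) ≠ 0 by decide, show (2:Fin 4) ≠ 0 by decide, show (3:Fin 4) ≠ 0 by decide,
    show (2:Fin 4) ≠ 1 by decide, show (3:Fin 4) ≠ 1 by decide, show (3:Fin 4) ≠ 2 by decide,
    show (0:Fin 4) ≠ 1 by decide, show (0:Fin 4) ≠ 2 by decide, show (0:Fin 4) ≠ 3 by decide,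
    show (1:Fin 4) ≠ 2 by decide, show (1:Fin 4) ≠ 3 by decide, show (2:Fin 4) ≠ 3 by decide]
  try ring

lemma hodge_03 (F : Fin 4 → Fin 4 → ℂ) : hodge F 0 3 = (F 1 2 - F 2 1)/2 := by
  simp only [hodge, up2, Fin.sum_univ_four, eps, gm, Fin.isValue]
  norm_num [show ((0:Fin 4).val) = 0 from rfl, show ((1:Fin 4).val) = 1 from rfl,
    show ((2:Fin 4).val) = 2 from rfl, show ((3:Fin 4).val) = 3 from rfl,
    show (1:Fin 4) ≠ 0 by decide, show (2:Fin 4) ≠ 0 by decide, show (3:Fin 4) ≠ 0 by decide,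
    show (2:Fin 4) ≠ 1 by decide, show (3:Fin 4) ≠ 1 by decide, show (3:Fin 4) ≠ 2 by decide,
    show (0:Fin 4) ≠ 1 by decide, show (0:Fin 4) ≠ 2 by decide, show (0:Fin 4) ≠ 3 by decide,
    show (1:Fin 4) ≠ 2 by decide, show (1:Fin 4) ≠ 3 by decide, show (2:Fin 4) ≠ 3 by decide]
  try ring

lemma hodge_10 (F : Fin 4 → Fin 4 → ℂ) : hodge F 1 0 = (F 3 2 - F 2 3)/2 := by
  simp only [hodge, up2, Fin.sum_univ_four, eps, gm, Fin.isValue]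
  norm_num [show ((0:Fin 4).val) = 0 from rfl, show ((1:Fin 4).val) = 1 from rfl,
    show ((2:Fin 4).val) = 2 from rfl, show ((3:Fin 4).val) = 3 from rfl,
    show (1:Fin 4) ≠ 0 by decide, show (2:Fin 4) ≠ 0 by decide, show (3:Fin 4) ≠ 0 by decide,
    show (2:Fin 4) ≠ 1 by decide, show (3:Fin 4) ≠ 1 by decide, show (3:Fin 4) ≠ 2 by decide,
    show (0:Fin 4) ≠ 1 by decide, show (0:Fin 4) ≠ 2 by decide, show (0:Fin 4) ≠ 3 by decide,
    show (1:Fin 4) ≠ 2 by decide, show (1:Fin 4) ≠ 3 by decide, show (2:Fin 4) ≠ 3 by decide]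
  try ring

lemma hodge_11 (F : Fin 4 → Fin 4 → ℂ) : hodge F 1 1 = 0 := by
  simp only [hodge, up2, Fin.sum_univ_four, eps, gm, Fin.isValue]
  norm_num [show ((0:Fin 4).val) = 0 from rfl, show ((1:Fin 4).val) = 1 from rfl,
    show ((2:Fin 4).val) = 2 from rfl, show ((3:Fin 4).val) = 3 from rfl,
    show (1:Fin 4) ≠ 0 by decide, show (2:Fin 4) ≠ 0 by decide, show (3:Fin 4) ≠ 0 by decide,
    show (2:Fin 4) ≠ 1 by decide, show (3:Fin 4) ≠ 1 by decide, show (3:Fin 4) ≠ 2 by decide,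
    show (0:Fin 4) ≠ 1 by decide, show (0:Fin 4) ≠ 2 by decide, show (0:Fin 4) ≠ 3 by decide,
    show (1:Fin 4) ≠ 2 by decide, show (1:Fin 4) ≠ 3 by decide, show (2:Fin 4) ≠ 3 by decide]
  try ring

lemma hodge_12 (F : Fin 4 → Fin 4 → ℂ) : hodge F 1 2 = (F 3 0 - F 0 3)/2 := by
  simp only [hodge, up2, Fin.sum_univ_four, eps, gm, Fin.isValue]
  norm_num [show ((0:Fin 4).val) = 0 from rfl, show ((1:Fin 4).val) = 1 from rfl,
    show ((2:Fin 4).val) = 2 from rfl, show ((3:Fin 4).val) = 3 from rfl,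
    show (1:Fin 4) ≠ 0 by decide, show (2:Fin 4) ≠ 0 by decide, show (3:Fin 4) ≠ 0 by decide,
    show (2:Fin 4) ≠ 1 by decide, show (3:Fin 4) ≠ 1 by decide, show (3:Fin 4) ≠ 2 by decide,
    show (0:Fin 4) ≠ 1 by decide, show (0:Fin 4) ≠ 2 by decide, show (0:Fin 4) ≠ 3 by decide,
    show (1:Fin 4) ≠ 2 by decide, show (1:Fin 4) ≠ 3 by decide, show (2:Fin 4) ≠ 3 by decide]
  try ring

lemma hodge_13 (F : Fin 4 → Fin 4 → ℂ) : hodge F 1 3 = (F 0 2 - F 2 0)/2 := by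
  simp only [hodge, up2, Fin.sum_univ_four, eps, gm, Fin.isValue]
  norm_num [show ((0:Fin 4).val) = 0 from rfl, show ((1:Fin 4).val) = 1 from rfl,
    show ((2:Fin 4).val) = 2 from rfl, show ((3:Fin 4).val) = 3 from rfl,
    show (1:Fin 4) ≠ 0 by decide, show (2:Fin 4) ≠ 0 by decide, show (3:Fin 4) ≠ 0 by decide,
    show (2:Fin 4) ≠ 1 by decide, show (3:Fin 4) ≠ 1 by decide, show (3:Fin 4) ≠ 2 by decide,
    show (0:Fin 4) ≠ 1 by decide, show (0:Fin 4) ≠ 2 by decide, show (0:Fin 4) ≠ 3 by decide,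
    show (1:Fin 4) ≠ 2 by decide, show (1:Fin 4) ≠ 3 by decide, show (2:Fin 4) ≠ 3 by decide]
  try ring

lemma hodge_20 (F : Fin 4 → Fin 4 → ℂ) : hodge F 2 0 = (F 1 3 - F 3 1)/2 := by
  simp only [hodge, up2, Fin.sum_univ_four, eps, gm, Fin.isValue]
  norm_num [show ((0:Fin 4).val) = 0 from rfl, show ((1:Fin 4).val) = 1 from rfl,
    show ((2:Fin 4).val) = 2 from rfl, show ((3:Fin 4).val) = 3 from rfl,
    show (1:Fin 4) ≠ 0 by decide, show (2:Fin 4) ≠ 0 by decide, show (3:Fin 4) ≠ 0 by decide,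
    show (2:Fin 4) ≠ 1 by decide, show (3:Fin 4) ≠ 1 by decide, show (3:Fin 4) ≠ 2 by decide,
    show (0:Fin 4) ≠ 1 by decide, show (0:Fin 4) ≠ 2 by decide, show (0:Fin 4) ≠ 3 by decide,
    show (1:Fin 4) ≠ 2 by decide, show (1:Fin 4) ≠ 3 by decide, show (2:Fin 4) ≠ 3 by decide]
  try ring

lemma hodge_21 (F : Fin 4 → Fin 4 → ℂ) : hodge F 2 1 = (F 0 3 - F 3 0)/2 := by
  simp only [hodge, up2, Fin.sum_univ_four, eps, gm, Fin.isValue]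
  norm_num [show ((0:Fin 4).val) = 0 from rfl, show ((1:Fin 4).val) = 1 from rfl,
    show ((2:Fin 4).val) = 2 from rfl, show ((3:Fin 4).val) = 3 from rfl,
    show (1:Fin 4) ≠ 0 by decide, show (2:Fin 4) ≠ 0 by decide, show (3:Fin 4) ≠ 0 by decide,
    show (2:Fin 4) ≠ 1 by decide, show (3:Fin 4) ≠ 1 by decide, show (3:Fin 4) ≠ 2 by decide,
    show (0:Fin 4) ≠ 1 by decide, show (0:Fin 4) ≠ 2 by decide, show (0:Fin 4) ≠ 3 by decide,
    show (1:Fin 4) ≠ 2 by decide, show (1:Fin 4) ≠ 3 by decide, show (2:Fin 4) ≠ 3 by decide]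
  try ring

lemma hodge_22 (F : Fin 4 → Fin 4 → ℂ) : hodge F 2 2 = 0 := by
  simp only [hodge, up2, Fin.sum_univ_four, eps, gm, Fin.isValue]
  norm_num [show ((0:Fin 4).val) = 0 from rfl, show ((1:Fin 4).val) = 1 from rfl,
    show ((2:Fin 4).val) = 2 from rfl, show ((3:Fin 4).val) = 3 from rfl,
    show (1:Fin 4) ≠ 0 by decide, show (2:Fin 4) ≠ 0 by decide, show (3:Fin 4) ≠ 0 by decide,
    show (2:Fin 4) ≠ 1 by decide, show (3:Fin 4) ≠ 1 by decide, show (3:Fin 4) ≠ 2 by decide,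
    show (0:Fin 4) ≠ 1 by decide, show (0:Fin 4) ≠ 2 by decide, show (0:Fin 4) ≠ 3 by decide,
    show (1:Fin 4) ≠ 2 by decide, show (1:Fin 4) ≠ 3 by decide, show (2:Fin 4) ≠ 3 by decide]
  try ring

lemma hodge_23 (F : Fin 4 → Fin 4 → ℂ) : hodge F 2 3 = (F 1 0 - F 0 1)/2 := by
  simp only [hodge, up2, Fin.sum_univ_four, eps, gm, Fin.isValue]
  norm_num [show ((0:Fin 4).val) = 0 from rfl, show ((1:Fin 4).val) = 1 from rfl,
    show ((2:Fin 4).val) = 2 from rfl, show ((3:Fin 4).val) = 3 from rfl,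
    show (1:Fin 4) ≠ 0 by decide, show (2:Fin 4) ≠ 0 by decide, show (3:Fin 4) ≠ 0 by decide,
    show (2:Fin 4) ≠ 1 by decide, show (3:Fin 4) ≠ 1 by decide, show (3:Fin 4) ≠ 2 by decide,
    show (0:Fin 4) ≠ 1 by decide, show (0:Fin 4) ≠ 2 by decide, show (0:Fin 4) ≠ 3 by decide,
    show (1:Fin 4) ≠ 2 by decide, show (1:Fin 4) ≠ 3 by decide, show (2:Fin 4) ≠ 3 by decide]
  try ring

lemma hodge_30 (F : Fin 4 → Fin 4 → ℂ) : hodge F 3 0 = (F 2 1 - F 1 2)/2 := by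
  simp only [hodge, up2, Fin.sum_univ_four, eps, gm, Fin.isValue]
  norm_num [show ((0:Fin 4).val) = 0 from rfl, show ((1:Fin 4).val) = 1 from rfl,
    show ((2:Fin 4).val) = 2 from rfl, show ((3:Fin 4).val) = 3 from rfl,
    show (1:Fin 4) ≠ 0 by decide, show (2:Fin 4) ≠ 0 by decide, show (3:Fin 4) ≠ 0 by decide,
    show (2:Fin 4) ≠ 1 by decide, show (3:Fin 4) ≠ 1 by decide, show (3:Fin 4) ≠ 2 by decide,
    show (0:Fin 4) ≠ 1 by decide, show (0:Fin 4) ≠ 2 by decide, show (0:Fin 4) ≠ 3 by decide,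
    show (1:Fin 4) ≠ 2 by decide, show (1:Fin 4) ≠ 3 by decide, show (2:Fin 4) ≠ 3 by decide]
  try ring

lemma hodge_31 (F : Fin 4 → Fin 4 → ℂ) : hodge F 3 1 = (F 2 0 - F 0 2)/2 := by
  simp only [hodge, up2, Fin.sum_univ_four, eps, gm, Fin.isValue]
  norm_num [show ((0:Fin 4).val) = 0 from rfl, show ((1:Fin 4).val) = 1 from rfl,
    show ((2:Fin 4).val) = 2 from rfl, show ((3:Fin 4).val) = 3 from rfl,
    show (1:Fin 4) ≠ 0 by decide, show (2:Fin 4) ≠ 0 by decide, show (3:Fin 4) ≠ 0 by decide,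
    show (2:Fin 4) ≠ 1 by decide, show (3:Fin 4) ≠ 1 by decide, show (3:Fin 4) ≠ 2 by decide,
    show (0:Fin 4) ≠ 1 by decide, show (0:Fin 4) ≠ 2 by decide, show (0:Fin 4) ≠ 3 by decide,
    show (1:Fin 4) ≠ 2 by decide, show (1:Fin 4) ≠ 3 by decide, show (2:Fin 4) ≠ 3 by decide]
  try ring

lemma hodge_32 (F : Fin 4 → Fin 4 → ℂ) : hodge F 3 2 = (F 0 1 - F 1 0)/2 := by
  simp only [hodge, up2, Fin.sum_univ_four, eps, gm, Fin.isValue]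
  norm_num [show ((0:Fin 4).val) = 0 from rfl, show ((1:Fin 4).val) = 1 from rfl,
    show ((2:Fin 4).val) = 2 from rfl, show ((3:Fin 4).val) = 3 from rfl,
    show (1:Fin 4) ≠ 0 by decide, show (2:Fin 4) ≠ 0 by decide, show (3:Fin 4) ≠ 0 by decide,
    show (2:Fin 4) ≠ 1 by decide, show (3:Fin 4) ≠ 1 by decide, show (3:Fin 4) ≠ 2 by decide,
    show (0:Fin 4) ≠ 1 by decide, show (0:Fin 4) ≠ 2 by decide, show (0:Fin 4) ≠ 3 by decide,
    show (1:Fin 4) ≠ 2 by decide, show (1:Fin 4) ≠ 3 by decide, show (2:Fin 4) ≠ 3 by decide]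
  try ring

lemma hodge_33 (F : Fin 4 → Fin 4 → ℂ) : hodge F 3 3 = 0 := by
  simp only [hodge, up2, Fin.sum_univ_four, eps, gm, Fin.isValue]
  norm_num [show ((0:Fin 4).val) = 0 from rfl, show ((1:Fin 4).val) = 1 from rfl,
    show ((2:Fin 4).val) = 2 from rfl, show ((3:Fin 4).val) = 3 from rfl,
    show (1:Fin 4) ≠ 0 by decide, show (2:Fin 4) ≠ 0 by decide, show (3:Fin 4) ≠ 0 by decide,
    show (2:Fin 4) ≠ 1 by decide, show (3:Fin 4) ≠ 1 by decide, show (3:Fin 4) ≠ 2 by decide,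
    show (0:Fin 4) ≠ 1 by decide, show (0:Fin 4) ≠ 2 by decide, show (0:Fin 4) ≠ 3 by decide,
    show (1:Fin 4) ≠ 2 by decide, show (1:Fin 4) ≠ 3 by decide, show (2:Fin 4) ≠ 3 by decide]
  try ring

set_option maxHeartbeats 4000000 in
/-- Lanczos identity: for any two 2-forms `A`, `B` on 4-dimensional Minkowski space,
    `A_{αβ}B_{μν} + B*_{αβ}A*_{μν} = L_{μα}g_{βν} - L_{να}g_{βμ} - L_{μβ}g_{αν} + L_{νβ}g_{αμ}`
    where `L_{μν} = B_μ{}^ρ A_{νρ} - (1/4) g_{μν} B^{ρσ}A_{ρσ}`. -/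
theorem stmt5 (A B : Fin 4 → Fin 4 → ℂ)
    (hA : ∀ μ ν, A ν μ = - A μ ν) (hB : ∀ μ ν, B ν μ = - B μ ν)
    (L : Fin 4 → Fin 4 → ℂ)
    (hL : ∀ μ ν, L μ ν = (∑ ρ, ∑ σ, gm ρ σ * B μ σ * A ν ρ)
        - (1/4) * gm μ ν * (∑ ρ, ∑ σ, up2 B ρ σ * A ρ σ)) :
    ∀ α β μ ν, A α β * B μ ν + hodge B α β * hodge A μ ν
      = L μ α * gm β ν - L ν α * gm β μ - L μ β * gm α ν + L ν β * gm α μ := by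
  have e10 : (1:Fin 4) ≠ 0 := by decide
  have e20 : (2:Fin 4) ≠ 0 := by decide
  have e30 : (3:Fin 4) ≠ 0 := by decide
  have e21 : (2:Fin 4) ≠ 1 := by decide
  have e31 : (3:Fin 4) ≠ 1 := by decide
  have e32 : (3:Fin 4) ≠ 2 := by decide
  have e01 : (0:Fin 4) ≠ 1 := by decide
  have e02 : (0:Fin 4) ≠ 2 := by decide
  have e03 : (0:Fin 4) ≠ 3 := by decide
  have e12 : (1:Fin 4) ≠ 2 := by decide
  have e13 : (1:Fin 4) ≠ 3 := by decide
  have e23 : (2:Fin 4) ≠ 3 := by decide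
  have hS : (∑ ρ, ∑ σ, up2 B ρ σ * A ρ σ) = B 0 0 * A 0 0 - B 0 1 * A 0 1 - B 0 2 * A 0 2 - B 0 3 * A 0 3 - B 1 0 * A 1 0 + B 1 1 * A 1 1 + B 1 2 * A 1 2 + B 1 3 * A 1 3 - B 2 0 * A 2 0 + B 2 1 * A 2 1 + B 2 2 * A 2 2 + B 2 3 * A 2 3 - B 3 0 * A 3 0 + B 3 1 * A 3 1 + B 3 2 * A 3 2 + B 3 3 * A 3 3 := by
    simp only [up2, gm, Fin.sum_univ_four, Fin.isValue]
    simp only [e10,e20,e30,e21,e31,e32,e01,e02,e03,e12,e13,e23, if_true, if_false, ite_true, ite_false, if_neg, if_pos]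
    norm_num [e10,e20,e30,e21,e31,e32,e01,e02,e03,e12,e13,e23]
    ring
  have hL' : ∀ μ ν, L μ ν = (-(B μ 0 * A ν 0) + B μ 1 * A ν 1 + B μ 2 * A ν 2 + B μ 3 * A ν 3)
      - (1/4) * gm μ ν * (B 0 0 * A 0 0 - B 0 1 * A 0 1 - B 0 2 * A 0 2 - B 0 3 * A 0 3 - B 1 0 * A 1 0 + B 1 1 * A 1 1 + B 1 2 * A 1 2 + B 1 3 * A 1 3 - B 2 0 * A 2 0 + B 2 1 * A 2 1 + B 2 2 * A 2 2 + B 2 3 * A 2 3 - B 3 0 * A 3 0 + B 3 1 * A 3 1 + B 3 2 * A 3 2 + B 3 3 * A 3 3) := by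
    intro μ ν
    rw [hL, hS]
    simp only [gm, Fin.sum_univ_four, Fin.isValue]
    norm_num [e10,e20,e30,e21,e31,e32,e01,e02,e03,e12,e13,e23]
    try ring
  have dA0 : A 0 0 = 0 := by linear_combination hA 0 0 / 2
  have dA1 : A 1 1 = 0 := by linear_combination hA 1 1 / 2
  have dA2 : A 2 2 = 0 := by linear_combination hA 2 2 / 2
  have dA3 : A 3 3 = 0 := by linear_combination hA 3 3 / 2
  have dB0 : B 0 0 = 0 := by linear_combination hB 0 0 / 2
  have dB1 : B 1 1 = 0 := by linear_combination hB 1 1 / 2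
  have dB2 : B 2 2 = 0 := by linear_combination hB 2 2 / 2
  have dB3 : B 3 3 = 0 := by linear_combination hB 3 3 / 2
  intro α β μ ν
  have hfin : ∀ x : Fin 4, x = 0 ∨ x = 1 ∨ x = 2 ∨ x = 3 := by decide
  rcases hfin α with rfl|rfl|rfl|rfl <;> rcases hfin β with rfl|rfl|rfl|rfl <;>
    rcases hfin μ with rfl|rfl|rfl|rfl <;> rcases hfin ν with rfl|rfl|rfl|rfl <;>
  · simp only [hL',
      hodge_00, hodge_01, hodge_02, hodge_03, hodge_10, hodge_11, hodge_12, hodge_13,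
      hodge_20, hodge_21, hodge_22, hodge_23, hodge_30, hodge_31, hodge_32, hodge_33,
      hA 0 1, hA 0 2, hA 0 3, hA 1 2, hA 1 3, hA 2 3,
      hB 0 1, hB 0 2, hB 0 3, hB 1 2, hB 1 3, hB 2 3,
      dA0,dA1,dA2,dA3,dB0,dB1,dB2,dB3]
    norm_num [gm, e10,e20,e30,e21,e31,e32,e01,e02,e03,e12,e13,e23]
    try ring
end

section
/- Given real constants k, b₂, c, Λ, suppose the quartic polynomial V(ζ) = k + b₂ζ - cζ² - (Λ/3)ζ⁴ has two real roots ζ₀ ≤ ζ₁ and factors as V(ζ) = V̂(ζ)(ζ - ζ₀)(ζ₁ - ζ) with V̂ > 0 on [ζ₀, ζ₁]. Define v₀ = V̂((ζ₀+ζ₁)/2), a = (ζ₁-ζ₀)/(2√v₀), l = (ζ₁+ζ₀)/(2√v₀). Then b₂ = 2 v₀^{3/2} l (1 + (Λ/3)(a² - 4l²)), k = v₀² (a² - l²)(1 - l²Λ), and c = v₀ (1 - (Λ/3)(a² + 6l²)). -/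
/-- If the quartic `V(ζ) = k + b₂ζ - cζ² - (Λ/3)ζ⁴` factors as
    `V̂(ζ)(ζ - ζ₀)(ζ₁ - ζ)` with `V̂` a quadratic polynomial positive on `[ζ₀,ζ₁]`,
    then with `v₀ = V̂((ζ₀+ζ₁)/2)`, `a = (ζ₁-ζ₀)/(2√v₀)`, `l = (ζ₁+ζ₀)/(2√v₀)`:
    `b₂ = 2 v₀^{3/2} l (1 + (Λ/3)(a² - 4l²))`, `k = v₀²(a² - l²)(1 - l²Λ)` and
    `c = v₀(1 - (Λ/3)(a² + 6l²))`. -/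
theorem stmt15 (k b₂ c Λ ζ₀ ζ₁ : ℝ) (Vhat : ℝ → ℝ)
    (hord : ζ₀ ≤ ζ₁)
    (hquad : ∃ p q r : ℝ, ∀ ζ, Vhat ζ = p * ζ ^ 2 + q * ζ + r)
    (hfact : ∀ ζ : ℝ, k + b₂ * ζ - c * ζ ^ 2 - (Λ / 3) * ζ ^ 4
        = Vhat ζ * (ζ - ζ₀) * (ζ₁ - ζ))
    (hpos : ∀ ζ ∈ Set.Icc ζ₀ ζ₁, 0 < Vhat ζ) :
    let v₀ := Vhat ((ζ₀ + ζ₁) / 2)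
    let a := (ζ₁ - ζ₀) / (2 * Real.sqrt v₀)
    let l := (ζ₁ + ζ₀) / (2 * Real.sqrt v₀)
    b₂ = 2 * v₀ * Real.sqrt v₀ * l * (1 + (Λ / 3) * (a ^ 2 - 4 * l ^ 2)) ∧
    k = v₀ ^ 2 * (a ^ 2 - l ^ 2) * (1 - l ^ 2 * Λ) ∧
    c = v₀ * (1 - (Λ / 3) * (a ^ 2 + 6 * l ^ 2)) := by
  obtain ⟨p, q, r, hpqr⟩ := hquad
  intro v₀ a l
  have hmid : (ζ₀ + ζ₁) / 2 ∈ Set.Icc ζ₀ ζ₁ := by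
    constructor <;> nlinarith
  have hv : 0 < v₀ := hpos _ hmid
  have hv₀ : v₀ = p * ((ζ₀ + ζ₁) / 2) ^ 2 + q * ((ζ₀ + ζ₁) / 2) + r := hpqr _
  set S := Real.sqrt v₀ with hSdef
  have hS2 : S ^ 2 = v₀ := Real.sq_sqrt hv.le
  have hSpos : 0 < S := Real.sqrt_pos.mpr hv
  have h0 := hfact 0; rw [hpqr] at h0
  have h1 := hfact 1; rw [hpqr] at h1
  have h2 := hfact (-1); rw [hpqr] at h2
  have h3 := hfact 2; rw [hpqr] at h3
  have h4 := hfact (-2); rw [hpqr] at h4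
  have hp : p = Λ / 3 := by linear_combination (h3 + h4 - 4*h1 - 4*h2 + 6*h0) / 24
  have hq : q = p * (ζ₀ + ζ₁) := by
    linear_combination ((h3 - h4) - 2*(h1 - h2)) / 12
  have hc : c = r - q * (ζ₀ + ζ₁) + p * (ζ₀ * ζ₁) := by
    linear_combination -(16*(h1 + h2) - (h3 + h4) - 30*h0) / 24
  have hb : b₂ = r * (ζ₀ + ζ₁) - q * (ζ₀ * ζ₁) := by
    linear_combination (8*(h1 - h2) - (h3 - h4)) / 12
  have hk : k = -(r * (ζ₀ * ζ₁)) := by linear_combination h0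
  have hr : r = v₀ - Λ / 4 * (ζ₀ + ζ₁) ^ 2 := by
    linear_combination (-1) * hv₀ - ((ζ₀ + ζ₁) / 2) * hq - (3 * (ζ₀ + ζ₁) ^ 2 / 4) * hp
  have hq2 : q = Λ / 3 * (ζ₀ + ζ₁) := by
    linear_combination hq + (ζ₀ + ζ₁) * hp
  have hSne : S ≠ 0 := hSpos.ne'
  refine ⟨?_, ?_, ?_⟩
  · show b₂ = 2 * v₀ * S * ((ζ₁ + ζ₀) / (2 * S)) * (1 + Λ / 3 *
      (((ζ₁ - ζ₀) / (2 * S)) ^ 2 - 4 * ((ζ₁ + ζ₀) / (2 * S)) ^ 2))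
    rw [hb, hq2, hr, ← hS2]
    field_simp
    ring
  · show k = v₀ ^ 2 * (((ζ₁ - ζ₀) / (2 * S)) ^ 2 - ((ζ₁ + ζ₀) / (2 * S)) ^ 2) *
      (1 - ((ζ₁ + ζ₀) / (2 * S)) ^ 2 * Λ)
    rw [hk, hr, ← hS2]
    field_simp
    ring
  · show c = v₀ * (1 - Λ / 3 * (((ζ₁ - ζ₀) / (2 * S)) ^ 2 + 6 * ((ζ₁ + ζ₀) / (2 * S)) ^ 2))
    rw [hc, hq2, hp, hr, ← hS2]
    field_simp
    ring
end

section
/- Let F be a regular self-dual complex 2-form on a 4-dimensional Lorentzian vector space with F² = -4R² ≠ 0, eigenvectors k, ℓ normalized by g(k,ℓ) = -1. Then R \bar{F}_{μν} + \bar{R} F_{μν} = -2R\bar{R}( k_μ ℓ_ν - ℓ_μ k_ν ). -/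
open Finset Complex

private lemma v0 : ((0 : Fin 4)).val = 0 := rfl
private lemma v1 : ((1 : Fin 4)).val = 1 := rfl
private lemma v2 : ((2 : Fin 4)).val = 2 := rfl
private lemma v3 : ((3 : Fin 4)).val = 3 := rfl

set_option maxHeartbeats 2000000 in
/-- For a regular self-dual 2-form with eigenvectors `k, ℓ` as above,
    `R \bar F_{μν} + \bar R F_{μν} = -2 R \bar R (k_μ ℓ_ν - ℓ_μ k_ν)`. -/
theorem stmt17 (F : Fin 4 → Fin 4 → ℂ) (hF : SelfDual F) (R : ℂ)
    (hR : sq2 F = -4 * R ^ 2) (hreg : sq2 F ≠ 0)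
    (k ℓ : Fin 4 → ℝ)
    (hknull : ∑ μ, (k μ : ℂ) * lo k μ = 0) (hlnull : ∑ μ, (ℓ μ : ℂ) * lo ℓ μ = 0)
    (hkeig : ∀ μ, ∑ ν, (k ν : ℂ) * F μ ν = R * lo k μ)
    (hleig : ∀ μ, ∑ ν, (ℓ ν : ℂ) * F μ ν = -R * lo ℓ μ)
    (hnorm : ∑ μ, (k μ : ℂ) * lo ℓ μ = -1) :
    ∀ μ ν, R * (starRingEnd ℂ) (F μ ν) + (starRingEnd ℂ) R * F μ ν
      = -2 * R * (starRingEnd ℂ) R * (lo k μ * lo ℓ ν - lo ℓ μ * lo k ν) := by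
  obtain ⟨hA, hSD⟩ := hF
  have lk0 : lo k 0 = -(k 0 : ℂ) := by norm_num [lo, gm, Fin.sum_univ_four, Fin.ext_iff, v0, v1, v2, v3]
  have lk1 : lo k 1 = (k 1 : ℂ) := by norm_num [lo, gm, Fin.sum_univ_four, Fin.ext_iff, v0, v1, v2, v3]
  have lk2 : lo k 2 = (k 2 : ℂ) := by norm_num [lo, gm, Fin.sum_univ_four, Fin.ext_iff, v0, v1, v2, v3]
  have lk3 : lo k 3 = (k 3 : ℂ) := by norm_num [lo, gm, Fin.sum_univ_four, Fin.ext_iff, v0, v1, v2, v3]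
  have ll0 : lo ℓ 0 = -(ℓ 0 : ℂ) := by norm_num [lo, gm, Fin.sum_univ_four, Fin.ext_iff, v0, v1, v2, v3]
  have ll1 : lo ℓ 1 = (ℓ 1 : ℂ) := by norm_num [lo, gm, Fin.sum_univ_four, Fin.ext_iff, v0, v1, v2, v3]
  have ll2 : lo ℓ 2 = (ℓ 2 : ℂ) := by norm_num [lo, gm, Fin.sum_univ_four, Fin.ext_iff, v0, v1, v2, v3]
  have ll3 : lo ℓ 3 = (ℓ 3 : ℂ) := by norm_num [lo, gm, Fin.sum_univ_four, Fin.ext_iff, v0, v1, v2, v3]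
  have e0 : (k 0 : ℂ) * F 0 0 + (k 1 : ℂ) * F 0 1 + (k 2 : ℂ) * F 0 2 + (k 3 : ℂ) * F 0 3 = R * (-(k 0 : ℂ)) := by have := hkeig 0; rwa [Fin.sum_univ_four, lk0] at this
  have e1 : (k 0 : ℂ) * F 1 0 + (k 1 : ℂ) * F 1 1 + (k 2 : ℂ) * F 1 2 + (k 3 : ℂ) * F 1 3 = R * (k 1 : ℂ) := by have := hkeig 1; rwa [Fin.sum_univ_four, lk1] at this
  have e2 : (k 0 : ℂ) * F 2 0 + (k 1 : ℂ) * F 2 1 + (k 2 : ℂ) * F 2 2 + (k 3 : ℂ) * F 2 3 = R * (k 2 : ℂ) := by have := hkeig 2; rwa [Fin.sum_univ_four, lk2] at this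
  have e3 : (k 0 : ℂ) * F 3 0 + (k 1 : ℂ) * F 3 1 + (k 2 : ℂ) * F 3 2 + (k 3 : ℂ) * F 3 3 = R * (k 3 : ℂ) := by have := hkeig 3; rwa [Fin.sum_univ_four, lk3] at this
  have g0 : (ℓ 0 : ℂ) * F 0 0 + (ℓ 1 : ℂ) * F 0 1 + (ℓ 2 : ℂ) * F 0 2 + (ℓ 3 : ℂ) * F 0 3 = -R * (-(ℓ 0 : ℂ)) := by have := hleig 0; rwa [Fin.sum_univ_four, ll0] at this
  have g1 : (ℓ 0 : ℂ) * F 1 0 + (ℓ 1 : ℂ) * F 1 1 + (ℓ 2 : ℂ) * F 1 2 + (ℓ 3 : ℂ) * F 1 3 = -R * (ℓ 1 : ℂ) := by have := hleig 1; rwa [Fin.sum_univ_four, ll1] at this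
  have g2 : (ℓ 0 : ℂ) * F 2 0 + (ℓ 1 : ℂ) * F 2 1 + (ℓ 2 : ℂ) * F 2 2 + (ℓ 3 : ℂ) * F 2 3 = -R * (ℓ 2 : ℂ) := by have := hleig 2; rwa [Fin.sum_univ_four, ll2] at this
  have g3 : (ℓ 0 : ℂ) * F 3 0 + (ℓ 1 : ℂ) * F 3 1 + (ℓ 2 : ℂ) * F 3 2 + (ℓ 3 : ℂ) * F 3 3 = -R * (ℓ 3 : ℂ) := by have := hleig 3; rwa [Fin.sum_univ_four, ll3] at this
  have n1 : (k 0 : ℂ) * -(k 0 : ℂ) + (k 1 : ℂ) * (k 1 : ℂ) + (k 2 : ℂ) * (k 2 : ℂ) + (k 3 : ℂ) * (k 3 : ℂ) = 0 := by have := hknull; rwa [Fin.sum_univ_four, lk0, lk1, lk2, lk3] at this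
  have n2 : (ℓ 0 : ℂ) * -(ℓ 0 : ℂ) + (ℓ 1 : ℂ) * (ℓ 1 : ℂ) + (ℓ 2 : ℂ) * (ℓ 2 : ℂ) + (ℓ 3 : ℂ) * (ℓ 3 : ℂ) = 0 := by have := hlnull; rwa [Fin.sum_univ_four, ll0, ll1, ll2, ll3] at this
  have n3 : (k 0 : ℂ) * -(ℓ 0 : ℂ) + (k 1 : ℂ) * (ℓ 1 : ℂ) + (k 2 : ℂ) * (ℓ 2 : ℂ) + (k 3 : ℂ) * (ℓ 3 : ℂ) = -1 := by have := hnorm; rwa [Fin.sum_univ_four, ll0, ll1, ll2, ll3] at this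
  have u23 : up2 F 2 3 = F 2 3 := by norm_num [up2, gm, Fin.sum_univ_four, Fin.ext_iff, v0, v1, v2, v3]
  have u32 : up2 F 3 2 = F 3 2 := by norm_num [up2, gm, Fin.sum_univ_four, Fin.ext_iff, v0, v1, v2, v3]
  have u13 : up2 F 1 3 = F 1 3 := by norm_num [up2, gm, Fin.sum_univ_four, Fin.ext_iff, v0, v1, v2, v3]
  have u31 : up2 F 3 1 = F 3 1 := by norm_num [up2, gm, Fin.sum_univ_four, Fin.ext_iff, v0, v1, v2, v3]
  have u12 : up2 F 1 2 = F 1 2 := by norm_num [up2, gm, Fin.sum_univ_four, Fin.ext_iff, v0, v1, v2, v3]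
  have u21 : up2 F 2 1 = F 2 1 := by norm_num [up2, gm, Fin.sum_univ_four, Fin.ext_iff, v0, v1, v2, v3]
  have sd1 : F 2 3 - F 3 2 = -(2*Complex.I) * F 0 1 := by
    have h := hSD 0 1
    norm_num [hodge, Fin.sum_univ_four, eps, v0, v1, v2, v3, u23, u32] at h
    linear_combination (2:ℂ) * h
  have sd2 : F 3 1 - F 1 3 = -(2*Complex.I) * F 0 2 := by
    have h := hSD 0 2
    norm_num [hodge, Fin.sum_univ_four, eps, v0, v1, v2, v3, u31, u13] at h
    linear_combination (2:ℂ) * h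
  have sd3 : F 1 2 - F 2 1 = -(2*Complex.I) * F 0 3 := by
    have h := hSD 0 3
    norm_num [hodge, Fin.sum_univ_four, eps, v0, v1, v2, v3, u12, u21] at h
    linear_combination (2:ℂ) * h
  have key01 : F 0 1 = (-1) * (k 1 : ℂ) * (ℓ 0 : ℂ) * R + (1) * (k 0 : ℂ) * (ℓ 1 : ℂ) * R + (1) * Complex.I * (k 3 : ℂ) * (ℓ 2 : ℂ) * R + (-1) * Complex.I * (k 2 : ℂ) * (ℓ 3 : ℂ) * R := by
    linear_combination ((-1/2) * Complex.I * Complex.I * (k 0 : ℂ) * (ℓ 1 : ℂ)) * (hA 0 0) + ((-1) * Complex.I * Complex.I * (k 0 : ℂ) * (ℓ 0 : ℂ)) * (hA 0 1) + ((1) * Complex.I * (k 3 : ℂ) * (ℓ 0 : ℂ)) * (hA 0 2) + ((-1) * Complex.I * (k 2 : ℂ) * (ℓ 0 : ℂ)) * (hA 0 3) + ((-1/2) * Complex.I * Complex.I * (k 1 : ℂ) * (ℓ 0 : ℂ)) * (hA 1 1) + ((1/2) * Complex.I * (k 3 : ℂ) * (ℓ 1 : ℂ) + (-1/2) * Complex.I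 * Complex.I * (k 2 : ℂ) * (ℓ 0 : ℂ)) * (hA 1 2) + ((-1/2) * Complex.I * (k 2 : ℂ) * (ℓ 1 : ℂ) + (-1/2) * Complex.I * Complex.I * (k 3 : ℂ) * (ℓ 0 : ℂ)) * (hA 1 3) + ((1/2) * Complex.I * (k 3 : ℂ) * (ℓ 2 : ℂ)) * (hA 2 2) + ((1/2) * Complex.I * (k 3 : ℂ) * (ℓ 3 : ℂ) + (-1/2) * Complex.I * (k 2 : ℂ) * (ℓ 2 : ℂ)) * (hA 2 3) + ((-1/2) * Complex.I * (k 2 : ℂ) * (ℓ 3 : ℂ)) * (hA 3 3) + ((1) * Complex.I * Complex.I * (ℓ 1 : ℂ)) * (e0) + ((1) * Complex.I * Complex.I * (ℓ 0 : ℂ)) * (e1) + ((-1) * Complex.I * (k 3 : ℂ)) * (g2) + ((1) * Complex.I * (k 2 : ℂ)) * (g3) + ((-1) * (k 3 : ℂ) * (ℓ 3 : ℂ) * F 0 1 + (-1) * (k 2 : ℂ) * (ℓ 2 : ℂ) * F 0 1 + (-1) * (k 1 : ℂ) * (ℓ 1 : ℂ) * F 0 1 + (-1) * (k 1 : ℂ)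 * (k 3 : ℂ) * (ℓ 0 : ℂ) * (ℓ 3 : ℂ) * R + (-1) * (k 1 : ℂ) * (k 2 : ℂ) * (ℓ 0 : ℂ) * (ℓ 2 : ℂ) * R + (-1) * (k 1 : ℂ) * (k 1 : ℂ) * (ℓ 0 : ℂ) * (ℓ 1 : ℂ) * R + (1) * (k 0 : ℂ) * (ℓ 0 : ℂ) * F 0 1 + (1) * (k 0 : ℂ) * (k 3 : ℂ) * (ℓ 1 : ℂ) * (ℓ 3 : ℂ) * R + (1) * (k 0 : ℂ) * (k 2 : ℂ) * (ℓ 1 : ℂ) * (ℓ 2 : ℂ) * R + (1) * (k 0 : ℂ) * (k 1 : ℂ) * (ℓ 1 : ℂ) * (ℓ 1 : ℂ) * R + (1) * (k 0 : ℂ) * (k 1 : ℂ) * (ℓ 0 : ℂ) * (ℓ 0 : ℂ) * R + (-1) * (k 0 : ℂ) * (k 0 : ℂ) * (ℓ 0 : ℂ) * (ℓ 1 : ℂ) * R + (-1) * Complex.I * (k 3 : ℂ) * (ℓ 0 : ℂ) * F 0 2 + (1) * Complex.I * (k 2 : ℂ) * (ℓ 0 : ℂ) * F 0 3) * (Complex.I_sq)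 + ((1) * F 0 1 + (1) * (k 1 : ℂ) * (ℓ 0 : ℂ) * R + (-1) * (k 0 : ℂ) * (ℓ 1 : ℂ) * R + (1) * Complex.I * Complex.I * (k 1 : ℂ) * (ℓ 0 : ℂ) * R + (-1) * Complex.I * Complex.I * (k 0 : ℂ) * (ℓ 1 : ℂ) * R) * (n3) + ((1/2) * Complex.I * (k 3 : ℂ) * (ℓ 3 : ℂ) + (1/2) * Complex.I * (k 2 : ℂ) * (ℓ 2 : ℂ)) * (sd1) + ((-1/2) * Complex.I * (k 2 : ℂ) * (ℓ 1 : ℂ) + (1/2) * Complex.I * Complex.I * (k 3 : ℂ) * (ℓ 0 : ℂ)) * (sd2) + ((-1/2) * Complex.I * (k 3 : ℂ) * (ℓ 1 : ℂ) + (-1/2) * Complex.I * Complex.I * (k 2 : ℂ) * (ℓ 0 : ℂ)) * (sd3)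
  have key02 : F 0 2 = (-1) * (k 2 : ℂ) * (ℓ 0 : ℂ) * R + (1) * (k 0 : ℂ) * (ℓ 2 : ℂ) * R + (-1) * Complex.I * (k 3 : ℂ) * (ℓ 1 : ℂ) * R + (1) * Complex.I * (k 1 : ℂ) * (ℓ 3 : ℂ) * R := by
    linear_combination ((-1/2) * Complex.I * Complex.I * (k 0 : ℂ) * (ℓ 2 : ℂ)) * (hA 0 0) + ((-1) * Complex.I * (k 3 : ℂ) * (ℓ 0 : ℂ)) * (hA 0 1) + ((-1) * Complex.I * Complex.I * (k 0 : ℂ) * (ℓ 0 : ℂ)) * (hA 0 2) + ((1) * Complex.I * (k 1 : ℂ) * (ℓ 0 : ℂ)) * (hA 0 3) + ((-1/2) * Complex.I * (k 3 : ℂ) * (ℓ 1 : ℂ)) * (hA 1 1) + ((-1/2) * Complex.I * (k 3 : ℂ) * (ℓ 2 : ℂ) + (-1/2) * Complex.I * Complex.I * (k 1 : ℂ) * (ℓ 0 : ℂ)) * (hA 1 2) + ((-1/2) * Complex.I * (k 3 : ℂ) * (ℓ 3 : ℂ) + (1/2) * Complex.I * (k 1 : ℂ) * (ℓ 1 : ℂ))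 * (hA 1 3) + ((-1/2) * Complex.I * Complex.I * (k 2 : ℂ) * (ℓ 0 : ℂ)) * (hA 2 2) + ((1/2) * Complex.I * (k 1 : ℂ) * (ℓ 2 : ℂ) + (-1/2) * Complex.I * Complex.I * (k 3 : ℂ) * (ℓ 0 : ℂ)) * (hA 2 3) + ((1/2) * Complex.I * (k 1 : ℂ) * (ℓ 3 : ℂ)) * (hA 3 3) + ((1) * Complex.I * Complex.I * (ℓ 2 : ℂ)) * (e0) + ((1) * Complex.I * Complex.I * (ℓ 0 : ℂ)) * (e2) + ((1) * Complex.I * (k 3 : ℂ)) * (g1) + ((-1) * Complex.I * (k 1 : ℂ)) * (g3) + ((-1) * (k 3 : ℂ) * (ℓ 3 : ℂ) * F 0 2 + (-1) * (k 2 : ℂ) * (ℓ 2 : ℂ) * F 0 2 + (-1) * (k 2 : ℂ) * (k 3 : ℂ) * (ℓ 0 : ℂ) * (ℓ 3 : ℂ) * R + (-1) * (k 2 : ℂ) * (k 2 : ℂ) * (ℓ 0 : ℂ) * (ℓ 2 : ℂ) * R + (-1) * (k 1 : ℂ) * (ℓ 1 : ℂ) * F 0 2 + (-1) * (k 1 :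 ℂ) * (k 2 : ℂ) * (ℓ 0 : ℂ) * (ℓ 1 : ℂ) * R + (1) * (k 0 : ℂ) * (ℓ 0 : ℂ) * F 0 2 + (1) * (k 0 : ℂ) * (k 3 : ℂ) * (ℓ 2 : ℂ) * (ℓ 3 : ℂ) * R + (1) * (k 0 : ℂ) * (k 2 : ℂ) * (ℓ 2 : ℂ) * (ℓ 2 : ℂ) * R + (1) * (k 0 : ℂ) * (k 2 : ℂ) * (ℓ 0 : ℂ) * (ℓ 0 : ℂ) * R + (1) * (k 0 : ℂ) * (k 1 : ℂ) * (ℓ 1 : ℂ) * (ℓ 2 : ℂ) * R + (-1) * (k 0 : ℂ) * (k 0 : ℂ) * (ℓ 0 : ℂ) * (ℓ 2 : ℂ) * R + (1) * Complex.I * (k 3 : ℂ) * (ℓ 0 : ℂ) * F 0 1 + (-1) * Complex.I * (k 1 : ℂ) * (ℓ 0 : ℂ) * F 0 3) * (Complex.I_sq) + ((1) * F 0 2 + (1) * (k 2 : ℂ) * (ℓ 0 : ℂ) * R + (-1) * (k 0 : ℂ) * (ℓ 2 : ℂ) * R + (1) * Complex.I * Complex.I * (k 2 : ℂ) * (ℓ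 0 : ℂ) * R + (-1) * Complex.I * Complex.I * (k 0 : ℂ) * (ℓ 2 : ℂ) * R) * (n3) + ((-1/2) * Complex.I * (k 1 : ℂ) * (ℓ 2 : ℂ) + (-1/2) * Complex.I * Complex.I * (k 3 : ℂ) * (ℓ 0 : ℂ)) * (sd1) + ((1/2) * Complex.I * (k 3 : ℂ) * (ℓ 3 : ℂ) + (1/2) * Complex.I * (k 1 : ℂ) * (ℓ 1 : ℂ)) * (sd2) + ((-1/2) * Complex.I * (k 3 : ℂ) * (ℓ 2 : ℂ) + (1/2) * Complex.I * Complex.I * (k 1 : ℂ) * (ℓ 0 : ℂ)) * (sd3)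
  have key03 : F 0 3 = (-1) * (k 3 : ℂ) * (ℓ 0 : ℂ) * R + (1) * (k 0 : ℂ) * (ℓ 3 : ℂ) * R + (1) * Complex.I * (k 2 : ℂ) * (ℓ 1 : ℂ) * R + (-1) * Complex.I * (k 1 : ℂ) * (ℓ 2 : ℂ) * R := by
    linear_combination ((-1/2) * Complex.I * Complex.I * (k 0 : ℂ) * (ℓ 3 : ℂ)) * (hA 0 0) + ((1) * Complex.I * (k 2 : ℂ) * (ℓ 0 : ℂ)) * (hA 0 1) + ((-1) * Complex.I * (k 1 : ℂ) * (ℓ 0 : ℂ)) * (hA 0 2) + ((-1) * Complex.I * Complex.I * (k 0 : ℂ) * (ℓ 0 : ℂ)) * (hA 0 3) + ((1/2) * Complex.I * (k 2 : ℂ) * (ℓ 1 : ℂ)) * (hA 1 1) + ((1/2) * Complex.I * (k 2 : ℂ) * (ℓ 2 : ℂ) + (-1/2) * Complex.I * (k 1 : ℂ) * (ℓ 1 : ℂ)) * (hA 1 2) + ((1/2) * Complex.I * (k 2 : ℂ) * (ℓ 3 : ℂ) + (-1/2) * Complex.I * Complex.I * (k 1 : ℂ) * (ℓ 0 : ℂ))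 * (hA 1 3) + ((-1/2) * Complex.I * (k 1 : ℂ) * (ℓ 2 : ℂ)) * (hA 2 2) + ((-1/2) * Complex.I * (k 1 : ℂ) * (ℓ 3 : ℂ) + (-1/2) * Complex.I * Complex.I * (k 2 : ℂ) * (ℓ 0 : ℂ)) * (hA 2 3) + ((-1/2) * Complex.I * Complex.I * (k 3 : ℂ) * (ℓ 0 : ℂ)) * (hA 3 3) + ((1) * Complex.I * Complex.I * (ℓ 3 : ℂ)) * (e0) + ((1) * Complex.I * Complex.I * (ℓ 0 : ℂ)) * (e3) + ((-1) * Complex.I * (k 2 : ℂ)) * (g1) + ((1) * Complex.I * (k 1 : ℂ)) * (g2) + ((-1) * (k 3 : ℂ) * (ℓ 3 : ℂ) * F 0 3 + (-1) * (k 3 : ℂ) * (k 3 : ℂ) * (ℓ 0 : ℂ) * (ℓ 3 : ℂ) * R + (-1) * (k 2 : ℂ) * (ℓ 2 : ℂ) * F 0 3 + (-1) * (k 2 : ℂ) * (k 3 : ℂ) * (ℓ 0 : ℂ) * (ℓ 2 : ℂ) * R + (-1) * (k 1 : ℂ) * (ℓ 1 : ℂ) * F 0 3 + (-1) * (k 1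 : ℂ) * (k 3 : ℂ) * (ℓ 0 : ℂ) * (ℓ 1 : ℂ) * R + (1) * (k 0 : ℂ) * (ℓ 0 : ℂ) * F 0 3 + (1) * (k 0 : ℂ) * (k 3 : ℂ) * (ℓ 3 : ℂ) * (ℓ 3 : ℂ) * R + (1) * (k 0 : ℂ) * (k 3 : ℂ) * (ℓ 0 : ℂ) * (ℓ 0 : ℂ) * R + (1) * (k 0 : ℂ) * (k 2 : ℂ) * (ℓ 2 : ℂ) * (ℓ 3 : ℂ) * R + (1) * (k 0 : ℂ) * (k 1 : ℂ) * (ℓ 1 : ℂ) * (ℓ 3 : ℂ) * R + (-1) * (k 0 : ℂ) * (k 0 : ℂ) * (ℓ 0 : ℂ) * (ℓ 3 : ℂ) * R + (-1) * Complex.I * (k 2 : ℂ) * (ℓ 0 : ℂ) * F 0 1 + (1) * Complex.I * (k 1 : ℂ) * (ℓ 0 : ℂ) * F 0 2) * (Complex.I_sq) + ((1) * F 0 3 + (1) * (k 3 : ℂ) * (ℓ 0 : ℂ) * R + (-1) * (k 0 : ℂ) * (ℓ 3 : ℂ) * R + (1) * Complex.I * Complex.I * (k 3 : ℂ) * (ℓ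 0 : ℂ) * R + (-1) * Complex.I * Complex.I * (k 0 : ℂ) * (ℓ 3 : ℂ) * R) * (n3) + ((-1/2) * Complex.I * (k 1 : ℂ) * (ℓ 3 : ℂ) + (1/2) * Complex.I * Complex.I * (k 2 : ℂ) * (ℓ 0 : ℂ)) * (sd1) + ((-1/2) * Complex.I * (k 2 : ℂ) * (ℓ 3 : ℂ) + (-1/2) * Complex.I * Complex.I * (k 1 : ℂ) * (ℓ 0 : ℂ)) * (sd2) + ((1/2) * Complex.I * (k 2 : ℂ) * (ℓ 2 : ℂ) + (1/2) * Complex.I * (k 1 : ℂ) * (ℓ 1 : ℂ)) * (sd3)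
  have key12 : F 1 2 = (1) * (k 2 : ℂ) * (ℓ 1 : ℂ) * R + (-1) * (k 1 : ℂ) * (ℓ 2 : ℂ) * R + (1) * Complex.I * (k 3 : ℂ) * (ℓ 0 : ℂ) * R + (-1) * Complex.I * (k 0 : ℂ) * (ℓ 3 : ℂ) * R := by
    linear_combination ((1/2) * Complex.I * Complex.I * Complex.I * (k 0 : ℂ) * (ℓ 3 : ℂ)) * (hA 0 0) + ((-1) * Complex.I * Complex.I * (k 2 : ℂ) * (ℓ 0 : ℂ)) * (hA 0 1) + ((1) * Complex.I * Complex.I * (k 1 : ℂ) * (ℓ 0 : ℂ)) * (hA 0 2) + ((1) * Complex.I * Complex.I * Complex.I * (k 0 : ℂ) * (ℓ 0 : ℂ)) * (hA 0 3) + ((-1/2) * Complex.I * Complex.I * (k 2 : ℂ) * (ℓ 1 : ℂ)) * (hA 1 1) + ((1/2) + (-1/2) * Complex.I * Complex.I * (k 2 : ℂ) * (ℓ 2 : ℂ) + (1/2) * Complex.I * Complex.I * (k 1 : ℂ) * (ℓ 1 : ℂ)) * (hA 1 2) + ((-1/2) * Complex.I * Complex.I * (k 2 : ℂ) * (ℓ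 3 : ℂ) + (1/2) * Complex.I * Complex.I * Complex.I * (k 1 : ℂ) * (ℓ 0 : ℂ)) * (hA 1 3) + ((1/2) * Complex.I * Complex.I * (k 1 : ℂ) * (ℓ 2 : ℂ)) * (hA 2 2) + ((1/2) * Complex.I * Complex.I * (k 1 : ℂ) * (ℓ 3 : ℂ) + (1/2) * Complex.I * Complex.I * Complex.I * (k 2 : ℂ) * (ℓ 0 : ℂ)) * (hA 2 3) + ((1/2) * Complex.I * Complex.I * Complex.I * (k 3 : ℂ) * (ℓ 0 : ℂ)) * (hA 3 3) + ((-1) * Complex.I * Complex.I * Complex.I * (ℓ 3 : ℂ)) * (e0) + ((-1) * Complex.I * Complex.I * Complex.I * (ℓ 0 : ℂ)) * (e3) + ((1) * Complex.I * Complex.I * (k 2 : ℂ)) * (g1) + ((-1) * Complex.I * Complex.I * (k 1 : ℂ)) * (g2) + ((-1) * (k 2 : ℂ) * (ℓ 1 : ℂ) * R + (1) * (k 1 : ℂ) * (ℓ 2 : ℂ) * R + (1) * Complex.I * (k 3 : ℂ) * (ℓ 3 : ℂ) * F 0 3 + (1) * Complex.I * (k 3 : ℂ) * (k 3 : ℂ)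 * (ℓ 0 : ℂ) * (ℓ 3 : ℂ) * R + (1) * Complex.I * (k 2 : ℂ) * (ℓ 2 : ℂ) * F 0 3 + (1) * Complex.I * (k 2 : ℂ) * (k 3 : ℂ) * (ℓ 0 : ℂ) * (ℓ 2 : ℂ) * R + (1) * Complex.I * (k 1 : ℂ) * (ℓ 1 : ℂ) * F 0 3 + (1) * Complex.I * (k 1 : ℂ) * (k 3 : ℂ) * (ℓ 0 : ℂ) * (ℓ 1 : ℂ) * R + (-1) * Complex.I * (k 0 : ℂ) * (ℓ 0 : ℂ) * F 0 3 + (-1) * Complex.I * (k 0 : ℂ) * (k 3 : ℂ) * (ℓ 3 : ℂ) * (ℓ 3 : ℂ) * R + (-1) * Complex.I * (k 0 : ℂ) * (k 3 : ℂ) * (ℓ 0 : ℂ) * (ℓ 0 : ℂ) * R + (-1) * Complex.I * (k 0 : ℂ) * (k 2 : ℂ) * (ℓ 2 : ℂ) * (ℓ 3 : ℂ) * R + (-1) * Complex.I * (k 0 : ℂ) * (k 1 : ℂ) * (ℓ 1 : ℂ) * (ℓ 3 : ℂ) * R + (1) * Complex.I * (k 0 : ℂ) * (k 0 : ℂ)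 * (ℓ 0 : ℂ) * (ℓ 3 : ℂ) * R + (1) * Complex.I * Complex.I * (k 2 : ℂ) * (ℓ 0 : ℂ) * F 0 1 + (-1) * Complex.I * Complex.I * (k 1 : ℂ) * (ℓ 0 : ℂ) * F 0 2) * (Complex.I_sq) + ((-1) * Complex.I * F 0 3 + (-1) * Complex.I * (k 3 : ℂ) * (ℓ 0 : ℂ) * R + (1) * Complex.I * (k 0 : ℂ) * (ℓ 3 : ℂ) * R + (-1) * Complex.I * Complex.I * Complex.I * (k 3 : ℂ) * (ℓ 0 : ℂ) * R + (1) * Complex.I * Complex.I * Complex.I * (k 0 : ℂ) * (ℓ 3 : ℂ) * R) * (n3) + ((1/2) * Complex.I * Complex.I * (k 1 : ℂ) * (ℓ 3 : ℂ) + (-1/2) * Complex.I * Complex.I * Complex.I * (k 2 : ℂ) * (ℓ 0 : ℂ)) * (sd1) + ((1/2) * Complex.I * Complex.I * (k 2 : ℂ) * (ℓ 3 : ℂ) + (1/2) * Complex.I * Complex.I * Complex.I * (k 1 : ℂ) * (ℓ 0 : ℂ)) * (sd2) + ((1/2) + (-1/2) * Complex.I * Complex.I * (k 2 : ℂ) *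 (ℓ 2 : ℂ) + (-1/2) * Complex.I * Complex.I * (k 1 : ℂ) * (ℓ 1 : ℂ)) * (sd3)
  have key13 : F 1 3 = (1) * (k 3 : ℂ) * (ℓ 1 : ℂ) * R + (-1) * (k 1 : ℂ) * (ℓ 3 : ℂ) * R + (-1) * Complex.I * (k 2 : ℂ) * (ℓ 0 : ℂ) * R + (1) * Complex.I * (k 0 : ℂ) * (ℓ 2 : ℂ) * R := by
    linear_combination ((-1/2) * Complex.I * Complex.I * Complex.I * (k 0 : ℂ) * (ℓ 2 : ℂ)) * (hA 0 0) + ((-1) * Complex.I * Complex.I * (k 3 : ℂ) * (ℓ 0 : ℂ)) * (hA 0 1) + ((-1) * Complex.I * Complex.I * Complex.I * (k 0 : ℂ) * (ℓ 0 : ℂ)) * (hA 0 2) + ((1) * Complex.I * Complex.I * (k 1 : ℂ) * (ℓ 0 : ℂ)) * (hA 0 3) + ((-1/2) * Complex.I * Complex.I * (k 3 : ℂ) * (ℓ 1 : ℂ)) * (hA 1 1) + ((-1/2) * Complex.I * Complex.I * (k 3 : ℂ) * (ℓ 2 : ℂ) + (-1/2) * Complex.I * Complex.I * Complex.I * (k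 1 : ℂ) * (ℓ 0 : ℂ)) * (hA 1 2) + ((1/2) + (-1/2) * Complex.I * Complex.I * (k 3 : ℂ) * (ℓ 3 : ℂ) + (1/2) * Complex.I * Complex.I * (k 1 : ℂ) * (ℓ 1 : ℂ)) * (hA 1 3) + ((-1/2) * Complex.I * Complex.I * Complex.I * (k 2 : ℂ) * (ℓ 0 : ℂ)) * (hA 2 2) + ((1/2) * Complex.I * Complex.I * (k 1 : ℂ) * (ℓ 2 : ℂ) + (-1/2) * Complex.I * Complex.I * Complex.I * (k 3 : ℂ) * (ℓ 0 : ℂ)) * (hA 2 3) + ((1/2) * Complex.I * Complex.I * (k 1 : ℂ) * (ℓ 3 : ℂ)) * (hA 3 3) + ((1) * Complex.I * Complex.I * Complex.I * (ℓ 2 : ℂ)) * (e0) + ((1) * Complex.I * Complex.I * Complex.I * (ℓ 0 : ℂ)) * (e2) + ((1) * Complex.I * Complex.I * (k 3 : ℂ)) * (g1) + ((-1) * Complex.I * Complex.I * (k 1 : ℂ)) * (g3) + ((-1) * (k 3 : ℂ) * (ℓ 1 : ℂ) * R + (1) * (k 1 : ℂ) * (ℓ 3 : ℂ) * R + (-1)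 * Complex.I * (k 3 : ℂ) * (ℓ 3 : ℂ) * F 0 2 + (-1) * Complex.I * (k 2 : ℂ) * (ℓ 2 : ℂ) * F 0 2 + (-1) * Complex.I * (k 2 : ℂ) * (k 3 : ℂ) * (ℓ 0 : ℂ) * (ℓ 3 : ℂ) * R + (-1) * Complex.I * (k 2 : ℂ) * (k 2 : ℂ) * (ℓ 0 : ℂ) * (ℓ 2 : ℂ) * R + (-1) * Complex.I * (k 1 : ℂ) * (ℓ 1 : ℂ) * F 0 2 + (-1) * Complex.I * (k 1 : ℂ) * (k 2 : ℂ) * (ℓ 0 : ℂ) * (ℓ 1 : ℂ) * R + (1) * Complex.I * (k 0 : ℂ) * (ℓ 0 : ℂ) * F 0 2 + (1) * Complex.I * (k 0 : ℂ) * (k 3 : ℂ) * (ℓ 2 : ℂ) * (ℓ 3 : ℂ) * R + (1) * Complex.I * (k 0 : ℂ) * (k 2 : ℂ) * (ℓ 2 : ℂ) * (ℓ 2 : ℂ) * R + (1) * Complex.I * (k 0 : ℂ) * (k 2 : ℂ) * (ℓ 0 : ℂ) * (ℓ 0 : ℂ) * R + (1) * Complex.I * (k 0 : ℂ) * (k 1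 : ℂ) * (ℓ 1 : ℂ) * (ℓ 2 : ℂ) * R + (-1) * Complex.I * (k 0 : ℂ) * (k 0 : ℂ) * (ℓ 0 : ℂ) * (ℓ 2 : ℂ) * R + (1) * Complex.I * Complex.I * (k 3 : ℂ) * (ℓ 0 : ℂ) * F 0 1 + (-1) * Complex.I * Complex.I * (k 1 : ℂ) * (ℓ 0 : ℂ) * F 0 3) * (Complex.I_sq) + ((1) * Complex.I * F 0 2 + (1) * Complex.I * (k 2 : ℂ) * (ℓ 0 : ℂ) * R + (-1) * Complex.I * (k 0 : ℂ) * (ℓ 2 : ℂ) * R + (1) * Complex.I * Complex.I * Complex.I * (k 2 : ℂ) * (ℓ 0 : ℂ) * R + (-1) * Complex.I * Complex.I * Complex.I * (k 0 : ℂ) * (ℓ 2 : ℂ) * R) * (n3) + ((-1/2) * Complex.I * Complex.I * (k 1 : ℂ) * (ℓ 2 : ℂ) + (-1/2) * Complex.I * Complex.I * Complex.I * (k 3 : ℂ) * (ℓ 0 : ℂ)) * (sd1) + ((-1/2) + (1/2) * Complex.I * Complex.I * (k 3 : ℂ) * (ℓ 3 : ℂ) + (1/2) * Complex.I * Complex.I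 * (k 1 : ℂ) * (ℓ 1 : ℂ)) * (sd2) + ((-1/2) * Complex.I * Complex.I * (k 3 : ℂ) * (ℓ 2 : ℂ) + (1/2) * Complex.I * Complex.I * Complex.I * (k 1 : ℂ) * (ℓ 0 : ℂ)) * (sd3)
  have key23 : F 2 3 = (1) * (k 3 : ℂ) * (ℓ 2 : ℂ) * R + (-1) * (k 2 : ℂ) * (ℓ 3 : ℂ) * R + (1) * Complex.I * (k 1 : ℂ) * (ℓ 0 : ℂ) * R + (-1) * Complex.I * (k 0 : ℂ) * (ℓ 1 : ℂ) * R := by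
    linear_combination ((1/2) * Complex.I * Complex.I * Complex.I * (k 0 : ℂ) * (ℓ 1 : ℂ)) * (hA 0 0) + ((1) * Complex.I * Complex.I * Complex.I * (k 0 : ℂ) * (ℓ 0 : ℂ)) * (hA 0 1) + ((-1) * Complex.I * Complex.I * (k 3 : ℂ) * (ℓ 0 : ℂ)) * (hA 0 2) + ((1) * Complex.I * Complex.I * (k 2 : ℂ) * (ℓ 0 : ℂ)) * (hA 0 3) + ((1/2) * Complex.I * Complex.I * Complex.I * (k 1 : ℂ) * (ℓ 0 : ℂ)) * (hA 1 1) + ((-1/2) * Complex.I * Complex.I * (k 3 : ℂ) * (ℓ 1 : ℂ) + (1/2) * Complex.I * Complex.I * Complex.I * (k 2 : ℂ) * (ℓ 0 : ℂ)) * (hA 1 2) + ((1/2) * Complex.I * Complex.I * (k 2 : ℂ) * (ℓ 1 : ℂ) + (1/2) * Complex.I * Complex.I * Complex.I * (k 3 : ℂ) * (ℓ 0 : ℂ)) * (hA 1 3) + ((-1/2) * Complex.I * Complex.I * (k 3 : ℂ) * (ℓ 2 : ℂ)) * (hA 2 2) + ((1/2) + (-1/2) * Complex.I * Complex.I * (k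 3 : ℂ) * (ℓ 3 : ℂ) + (1/2) * Complex.I * Complex.I * (k 2 : ℂ) * (ℓ 2 : ℂ)) * (hA 2 3) + ((1/2) * Complex.I * Complex.I * (k 2 : ℂ) * (ℓ 3 : ℂ)) * (hA 3 3) + ((-1) * Complex.I * Complex.I * Complex.I * (ℓ 1 : ℂ)) * (e0) + ((-1) * Complex.I * Complex.I * Complex.I * (ℓ 0 : ℂ)) * (e1) + ((1) * Complex.I * Complex.I * (k 3 : ℂ)) * (g2) + ((-1) * Complex.I * Complex.I * (k 2 : ℂ)) * (g3) + ((-1) * (k 3 : ℂ) * (ℓ 2 : ℂ) * R + (1) * (k 2 : ℂ) * (ℓ 3 : ℂ) * R + (1) * Complex.I * (k 3 : ℂ) * (ℓ 3 : ℂ) * F 0 1 + (1) * Complex.I * (k 2 : ℂ) * (ℓ 2 : ℂ) * F 0 1 + (1) * Complex.I * (k 1 : ℂ) * (ℓ 1 : ℂ) * F 0 1 + (1) * Complex.I * (k 1 : ℂ) * (k 3 : ℂ) * (ℓ 0 : ℂ) * (ℓ 3 : ℂ) * R + (1) * Complex.I * (k 1 : ℂ) * (k 2 : ℂ) * (ℓ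 0 : ℂ) * (ℓ 2 : ℂ) * R + (1) * Complex.I * (k 1 : ℂ) * (k 1 : ℂ) * (ℓ 0 : ℂ) * (ℓ 1 : ℂ) * R + (-1) * Complex.I * (k 0 : ℂ) * (ℓ 0 : ℂ) * F 0 1 + (-1) * Complex.I * (k 0 : ℂ) * (k 3 : ℂ) * (ℓ 1 : ℂ) * (ℓ 3 : ℂ) * R + (-1) * Complex.I * (k 0 : ℂ) * (k 2 : ℂ) * (ℓ 1 : ℂ) * (ℓ 2 : ℂ) * R + (-1) * Complex.I * (k 0 : ℂ) * (k 1 : ℂ) * (ℓ 1 : ℂ) * (ℓ 1 : ℂ) * R + (-1) * Complex.I * (k 0 : ℂ) * (k 1 : ℂ) * (ℓ 0 : ℂ) * (ℓ 0 : ℂ) * R + (1) * Complex.I * (k 0 : ℂ) * (k 0 : ℂ) * (ℓ 0 : ℂ) * (ℓ 1 : ℂ) * R + (1) * Complex.I * Complex.I * (k 3 : ℂ) * (ℓ 0 : ℂ) * F 0 2 + (-1) * Complex.I * Complex.I * (k 2 : ℂ) * (ℓ 0 : ℂ) * F 0 3) * (Complex.I_sq) + ((-1) * Complex.I * F 0 1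 + (-1) * Complex.I * (k 1 : ℂ) * (ℓ 0 : ℂ) * R + (1) * Complex.I * (k 0 : ℂ) * (ℓ 1 : ℂ) * R + (-1) * Complex.I * Complex.I * Complex.I * (k 1 : ℂ) * (ℓ 0 : ℂ) * R + (1) * Complex.I * Complex.I * Complex.I * (k 0 : ℂ) * (ℓ 1 : ℂ) * R) * (n3) + ((1/2) + (-1/2) * Complex.I * Complex.I * (k 3 : ℂ) * (ℓ 3 : ℂ) + (-1/2) * Complex.I * Complex.I * (k 2 : ℂ) * (ℓ 2 : ℂ)) * (sd1) + ((1/2) * Complex.I * Complex.I * (k 2 : ℂ) * (ℓ 1 : ℂ) + (-1/2) * Complex.I * Complex.I * Complex.I * (k 3 : ℂ) * (ℓ 0 : ℂ)) * (sd2) + ((1/2) * Complex.I * Complex.I * (k 3 : ℂ) * (ℓ 1 : ℂ) + (1/2) * Complex.I * Complex.I * Complex.I * (k 2 : ℂ) * (ℓ 0 : ℂ)) * (sd3)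
  have ckey01 : (starRingEnd ℂ) (F 0 1) = (-1) * (k 1 : ℂ) * (ℓ 0 : ℂ) * (starRingEnd ℂ) R + (1) * (k 0 : ℂ) * (ℓ 1 : ℂ) * (starRingEnd ℂ) R + (-1) * Complex.I * (k 3 : ℂ) * (ℓ 2 : ℂ) * (starRingEnd ℂ) R + (1) * Complex.I * (k 2 : ℂ) * (ℓ 3 : ℂ) * (starRingEnd ℂ) R := by
    rw [key01]; simp only [map_add, map_sub, map_mul, map_neg, map_one, Complex.conj_ofReal, Complex.conj_I, map_intCast]; push_cast; ring
  have ckey02 : (starRingEnd ℂ) (F 0 2) = (-1) * (k 2 : ℂ) * (ℓ 0 : ℂ) * (starRingEnd ℂ) R + (1) * (k 0 : ℂ) * (ℓ 2 : ℂ) * (starRingEnd ℂ) R + (1) * Complex.I * (k 3 : ℂ) * (ℓ 1 : ℂ) * (starRingEnd ℂ) R + (-1) * Complex.I * (k 1 : ℂ) * (ℓ 3 : ℂ) * (starRingEnd ℂ) R := by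
    rw [key02]; simp only [map_add, map_sub, map_mul, map_neg, map_one, Complex.conj_ofReal, Complex.conj_I, map_intCast]; push_cast; ring
  have ckey03 : (starRingEnd ℂ) (F 0 3) = (-1) * (k 3 : ℂ) * (ℓ 0 : ℂ) * (starRingEnd ℂ) R + (1) * (k 0 : ℂ) * (ℓ 3 : ℂ) * (starRingEnd ℂ) R + (-1) * Complex.I * (k 2 : ℂ) * (ℓ 1 : ℂ) * (starRingEnd ℂ) R + (1) * Complex.I * (k 1 : ℂ) * (ℓ 2 : ℂ) * (starRingEnd ℂ) R := by
    rw [key03]; simp only [map_add, map_sub, map_mul, map_neg, map_one, Complex.conj_ofReal, Complex.conj_I, map_intCast]; push_cast; ring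
  have ckey12 : (starRingEnd ℂ) (F 1 2) = (1) * (k 2 : ℂ) * (ℓ 1 : ℂ) * (starRingEnd ℂ) R + (-1) * (k 1 : ℂ) * (ℓ 2 : ℂ) * (starRingEnd ℂ) R + (-1) * Complex.I * (k 3 : ℂ) * (ℓ 0 : ℂ) * (starRingEnd ℂ) R + (1) * Complex.I * (k 0 : ℂ) * (ℓ 3 : ℂ) * (starRingEnd ℂ) R := by
    rw [key12]; simp only [map_add, map_sub, map_mul, map_neg, map_one, Complex.conj_ofReal, Complex.conj_I, map_intCast]; push_cast; ring
  have ckey13 : (starRingEnd ℂ) (F 1 3) = (1) * (k 3 : ℂ) * (ℓ 1 : ℂ) * (starRingEnd ℂ) R + (-1) * (k 1 : ℂ) * (ℓ 3 : ℂ) * (starRingEnd ℂ) R + (1) * Complex.I * (k 2 : ℂ) * (ℓ 0 : ℂ) * (starRingEnd ℂ) R + (-1) * Complex.I * (k 0 : ℂ) * (ℓ 2 : ℂ) * (starRingEnd ℂ) R := by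
    rw [key13]; simp only [map_add, map_sub, map_mul, map_neg, map_one, Complex.conj_ofReal, Complex.conj_I, map_intCast]; push_cast; ring
  have ckey23 : (starRingEnd ℂ) (F 2 3) = (1) * (k 3 : ℂ) * (ℓ 2 : ℂ) * (starRingEnd ℂ) R + (-1) * (k 2 : ℂ) * (ℓ 3 : ℂ) * (starRingEnd ℂ) R + (-1) * Complex.I * (k 1 : ℂ) * (ℓ 0 : ℂ) * (starRingEnd ℂ) R + (1) * Complex.I * (k 0 : ℂ) * (ℓ 1 : ℂ) * (starRingEnd ℂ) R := by
    rw [key23]; simp only [map_add, map_sub, map_mul, map_neg, map_one, Complex.conj_ofReal, Complex.conj_I, map_intCast]; push_cast; ring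
  have hd0 : F 0 0 = 0 := by linear_combination (hA 0 0) / 2
  have chd0 : (starRingEnd ℂ) (F 0 0) = 0 := by rw [hd0]; simp
  have hd1 : F 1 1 = 0 := by linear_combination (hA 1 1) / 2
  have chd1 : (starRingEnd ℂ) (F 1 1) = 0 := by rw [hd1]; simp
  have hd2 : F 2 2 = 0 := by linear_combination (hA 2 2) / 2
  have chd2 : (starRingEnd ℂ) (F 2 2) = 0 := by rw [hd2]; simp
  have hd3 : F 3 3 = 0 := by linear_combination (hA 3 3) / 2
  have chd3 : (starRingEnd ℂ) (F 3 3) = 0 := by rw [hd3]; simp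
  have h4 : ∀ m : Fin 4, m = 0 ∨ m = 1 ∨ m = 2 ∨ m = 3 := by decide
  intro μ ν
  rcases h4 μ with rfl | rfl | rfl | rfl <;> rcases h4 ν with rfl | rfl | rfl | rfl <;>
    simp only [lk0, lk1, lk2, lk3, ll0, ll1, ll2, ll3]
  · linear_combination R * chd0 + (starRingEnd ℂ) R * hd0
  · linear_combination R * ckey01 + (starRingEnd ℂ) R * key01
  · linear_combination R * ckey02 + (starRingEnd ℂ) R * key02
  · linear_combination R * ckey03 + (starRingEnd ℂ) R * key03
  · have ca : (starRingEnd ℂ) (F 1 0) = -(starRingEnd ℂ) (F 0 1) := by rw [hA 0 1, map_neg]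
    linear_combination R * ca + (starRingEnd ℂ) R * (hA 0 1) - (R * ckey01 + (starRingEnd ℂ) R * key01)
  · linear_combination R * chd1 + (starRingEnd ℂ) R * hd1
  · linear_combination R * ckey12 + (starRingEnd ℂ) R * key12
  · linear_combination R * ckey13 + (starRingEnd ℂ) R * key13
  · have ca : (starRingEnd ℂ) (F 2 0) = -(starRingEnd ℂ) (F 0 2) := by rw [hA 0 2, map_neg]
    linear_combination R * ca + (starRingEnd ℂ) R * (hA 0 2) - (R * ckey02 + (starRingEnd ℂ) R * key02)
  · have ca : (starRingEnd ℂ) (F 2 1) = -(starRingEnd ℂ) (F 1 2) := by rw [hA 1 2, map_neg]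
    linear_combination R * ca + (starRingEnd ℂ) R * (hA 1 2) - (R * ckey12 + (starRingEnd ℂ) R * key12)
  · linear_combination R * chd2 + (starRingEnd ℂ) R * hd2
  · linear_combination R * ckey23 + (starRingEnd ℂ) R * key23
  · have ca : (starRingEnd ℂ) (F 3 0) = -(starRingEnd ℂ) (F 0 3) := by rw [hA 0 3, map_neg]
    linear_combination R * ca + (starRingEnd ℂ) R * (hA 0 3) - (R * ckey03 + (starRingEnd ℂ) R * key03)
  · have ca : (starRingEnd ℂ) (F 3 1) = -(starRingEnd ℂ) (F 1 3) := by rw [hA 1 3, map_neg]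
    linear_combination R * ca + (starRingEnd ℂ) R * (hA 1 3) - (R * ckey13 + (starRingEnd ℂ) R * key13)
  · have ca : (starRingEnd ℂ) (F 3 2) = -(starRingEnd ℂ) (F 2 3) := by rw [hA 2 3, map_neg]
    linear_combination R * ca + (starRingEnd ℂ) R * (hA 2 3) - (R * ckey23 + (starRingEnd ℂ) R * key23)
  · linear_combination R * chd3 + (starRingEnd ℂ) R * hd3
end

section
/- Let F be a self-dual complex 2-form and ξ a vector on a 4-dimensional Lorentzian vector space, with P_α = ξ^β W_{βα}, q_α = \bar{P}^β W_{βα} as above. If at some point \bar{P} = aP for some a ∈ ℂ and ξ ≠ 0, then a is real and a = ±1 or P = 0; equivalently, q = aξ with a ∈ {+1,-1} whenever P ≠ 0. -/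
open Finset Complex

set_option maxHeartbeats 4000000 in
/-- If at a point `\bar P = a P` for some `a ∈ ℂ` and `ξ ≠ 0`, then `a` is real
    and either `P = 0` or `a = ±1`. -/
theorem stmt19 (F : Fin 4 → Fin 4 → ℂ) (hF : SelfDual F) (R : ℂ) (hRne : R ≠ 0)
    (hR : sq2 F = -4 * R ^ 2) (hreg : sq2 F ≠ 0)
    (ξ : Fin 4 → ℝ) (hξ : ξ ≠ 0)
    (W : Fin 4 → Fin 4 → ℂ) (hW : ∀ μ ν, W μ ν = F μ ν / R)
    (P : Fin 4 → ℂ) (hP : ∀ α, P α = ∑ β, (ξ β : ℂ) * W β α)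
    (a : ℂ) (ha : ∀ α, (starRingEnd ℂ) (P α) = a * P α) :
    a.im = 0 ∧ ((∀ α, P α = 0) ∨ (a = 1 ∨ a = -1)) := by
  obtain ⟨hA, hSD⟩ := hF
  -- Stage A: component structure of a self-dual form
  have hup : ∀ μ ν, up2 F μ ν =
      (if μ = 0 then -1 else 1) * (if ν = 0 then -1 else 1) * F μ ν := by
    intro μ ν
    fin_cases μ <;> fin_cases ν <;> simp [up2, gm, Fin.sum_univ_four]
  have c00 : F 0 0 = 0 := by linear_combination (1/2) * hA 0 0
  have c11 : F 1 1 = 0 := by linear_combination (1/2) * hA 1 1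
  have c22 : F 2 2 = 0 := by linear_combination (1/2) * hA 2 2
  have c33 : F 3 3 = 0 := by linear_combination (1/2) * hA 3 3
  have c23 : F 2 3 = -Complex.I * F 0 1 := by
    have h := hSD 0 1
    simp only [hodge, Fin.sum_univ_four, hup] at h
    norm_num [eps, show ((0:Fin 4).val)=0 from rfl, show ((1:Fin 4).val)=1 from rfl,
      show ((2:Fin 4).val)=2 from rfl, show ((3:Fin 4).val)=3 from rfl, Fin.ext_iff] at h
    linear_combination h + (1/2) * hA 2 3
  have c13 : F 1 3 = Complex.I * F 0 2 := by
    have h := hSD 0 2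
    simp only [hodge, Fin.sum_univ_four, hup] at h
    norm_num [eps, show ((0:Fin 4).val)=0 from rfl, show ((1:Fin 4).val)=1 from rfl,
      show ((2:Fin 4).val)=2 from rfl, show ((3:Fin 4).val)=3 from rfl, Fin.ext_iff] at h
    linear_combination -h + (1/2) * hA 1 3
  have c12 : F 1 2 = -Complex.I * F 0 3 := by
    have h := hSD 0 3
    simp only [hodge, Fin.sum_univ_four, hup] at h
    norm_num [eps, show ((0:Fin 4).val)=0 from rfl, show ((1:Fin 4).val)=1 from rfl,
      show ((2:Fin 4).val)=2 from rfl, show ((3:Fin 4).val)=3 from rfl, Fin.ext_iff] at h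
    linear_combination h + (1/2) * hA 1 2
  have c10 : F 1 0 = -F 0 1 := hA 0 1
  have c20 : F 2 0 = -F 0 2 := hA 0 2
  have c30 : F 3 0 = -F 0 3 := hA 0 3
  have c21 : F 2 1 = -F 1 2 := hA 1 2
  have c31 : F 3 1 = -F 1 3 := hA 1 3
  have c32 : F 3 2 = -F 2 3 := hA 2 3
  -- the scalar constraint
  have hE : F 0 1 ^ 2 + F 0 2 ^ 2 + F 0 3 ^ 2 = R ^ 2 := by
    simp only [sq2, Fin.sum_univ_four, hup] at hR
    norm_num [c00, c11, c22, c33, c10, c20, c30, c21, c31, c32, c23, c13, c12,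
      (by decide : ¬ (2:Fin 4) = 0), (by decide : ¬ (3:Fin 4) = 0)] at hR
    linear_combination (-1/4)*hR + ((F 0 1^2 + F 0 2^2 + F 0 3^2)/2) * Complex.I_sq
  -- Stage B: the rescaled covector q = R • P
  obtain ⟨q0, hq0d⟩ : ∃ z, R * P 0 = z := ⟨_, rfl⟩
  obtain ⟨q1, hq1d⟩ : ∃ z, R * P 1 = z := ⟨_, rfl⟩
  obtain ⟨q2, hq2d⟩ : ∃ z, R * P 2 = z := ⟨_, rfl⟩
  obtain ⟨q3, hq3d⟩ : ∃ z, R * P 3 = z := ⟨_, rfl⟩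
  have hq0f : q0 = -(↑(ξ 1) * F 0 1 + ↑(ξ 2) * F 0 2 + ↑(ξ 3) * F 0 3) := by
    rw [← hq0d, hP 0]
    simp only [Fin.sum_univ_four, hW, c00, c10, c20, c30]
    field_simp; ring
  have hq1f : q1 = ↑(ξ 0) * F 0 1 + Complex.I * (↑(ξ 2) * F 0 3 - ↑(ξ 3) * F 0 2) := by
    rw [← hq1d, hP 1]
    simp only [Fin.sum_univ_four, hW, c11, c21, c31, c12, c13]
    field_simp; ring
  have hq2f : q2 = ↑(ξ 0) * F 0 2 + Complex.I * (↑(ξ 3) * F 0 1 - ↑(ξ 1) * F 0 3) := by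
    rw [← hq2d, hP 2]
    simp only [Fin.sum_univ_four, hW, c22, c12, c32, c23]
    field_simp; ring
  have hq3f : q3 = ↑(ξ 0) * F 0 3 + Complex.I * (↑(ξ 1) * F 0 2 - ↑(ξ 2) * F 0 1) := by
    rw [← hq3d, hP 3]
    simp only [Fin.sum_univ_four, hW, c33, c13, c23]
    field_simp; ring
  -- the conjugation relation for q
  obtain ⟨b, hbR⟩ : ∃ z, z * R = a * (starRingEnd ℂ) R := ⟨a * (starRingEnd ℂ) R / R, by field_simp⟩
  have hbq : ∀ α, (starRingEnd ℂ) (R * P α) = b * (R * P α) := by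
    intro α
    rw [map_mul, ha α]
    linear_combination (-(P α)) * hbR
  have hb0 : (starRingEnd ℂ) q0 = b * q0 := by rw [← hq0d]; exact hbq 0
  have hb1 : (starRingEnd ℂ) q1 = b * q1 := by rw [← hq1d]; exact hbq 1
  have hb2 : (starRingEnd ℂ) q2 = b * q2 := by rw [← hq2d]; exact hbq 2
  have hb3 : (starRingEnd ℂ) q3 = b * q3 := by rw [← hq3d]; exact hbq 3
  -- the key scalar identity q·q = (ξ·ξ) R²  (mostly-plus signature, overall sign -)
  have KeyS : -q0^2 + q1^2 + q2^2 + q3^2 =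
      ((ξ 0 : ℂ)^2 - (ξ 1 : ℂ)^2 - (ξ 2 : ℂ)^2 - (ξ 3 : ℂ)^2) * R^2 := by
    rw [hq0f, hq1f, hq2f, hq3f]
    linear_combination ((ξ 0 : ℂ)^2 - (ξ 1 : ℂ)^2 - (ξ 2 : ℂ)^2 - (ξ 3 : ℂ)^2) * hE +
      (((ξ 1 : ℂ)^2 + (ξ 2 : ℂ)^2 + (ξ 3 : ℂ)^2) * (F 0 1^2 + F 0 2^2 + F 0 3^2) -
        ((ξ 1 : ℂ) * F 0 1 + (ξ 2 : ℂ) * F 0 2 + (ξ 3 : ℂ) * F 0 3)^2) * Complex.I_sq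
  -- main dichotomy: a² = 1
  have hconjRne : (starRingEnd ℂ) R ≠ 0 := by simpa using hRne
  have ha2 : a ^ 2 = 1 := by
    by_cases hNC : ((ξ 0 : ℂ)^2 - (ξ 1 : ℂ)^2 - (ξ 2 : ℂ)^2 - (ξ 3 : ℂ)^2) = 0
    · -- null case
      have hNr : (ξ 0)^2 = (ξ 1)^2 + (ξ 2)^2 + (ξ 3)^2 := by
        have h : ((ξ 0 ^ 2 - ξ 1 ^ 2 - ξ 2 ^ 2 - ξ 3 ^ 2 : ℝ) : ℂ) = 0 := by
          push_cast; linear_combination hNC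
        have := Complex.ofReal_eq_zero.mp h
        linarith
      have ht : ξ 0 ≠ 0 := by
        intro h0
        apply hξ
        have h1 : ξ 1 = 0 := by nlinarith [sq_nonneg (ξ 1), sq_nonneg (ξ 2), sq_nonneg (ξ 3)]
        have h2 : ξ 2 = 0 := by nlinarith [sq_nonneg (ξ 1), sq_nonneg (ξ 2), sq_nonneg (ξ 3)]
        have h3 : ξ 3 = 0 := by nlinarith [sq_nonneg (ξ 1), sq_nonneg (ξ 2), sq_nonneg (ξ 3)]
        funext α
        fin_cases α <;> simp [h0, h1, h2, h3]
      have KeyS0 : -q0^2 + q1^2 + q2^2 + q3^2 = 0 := by rw [KeyS, hNC, zero_mul]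
      have KeyCon0 : -(q0 * (starRingEnd ℂ) q0) + q1 * (starRingEnd ℂ) q1 +
          q2 * (starRingEnd ℂ) q2 + q3 * (starRingEnd ℂ) q3 = 0 := by
        rw [hb0, hb1, hb2, hb3]
        linear_combination b * KeyS0
      have Keyxi : (ξ 0 : ℂ) * q0 + (ξ 1 : ℂ) * q1 + (ξ 2 : ℂ) * q2 + (ξ 3 : ℂ) * q3 = 0 := by
        rw [hq0f, hq1f, hq2f, hq3f]; ring
      -- real and imaginary parts
      have rS : -(q0.re^2 - q0.im^2) + (q1.re^2 - q1.im^2) + (q2.re^2 - q2.im^2) +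
          (q3.re^2 - q3.im^2) = 0 := by
        have := congrArg Complex.re KeyS0
        simp only [pow_two] at this ⊢
        simpa [Complex.add_re, Complex.neg_re, Complex.mul_re] using this
      have iS : -(q0.re * q0.im) + q1.re * q1.im + q2.re * q2.im + q3.re * q3.im = 0 := by
        have := congrArg Complex.im KeyS0
        simp only [pow_two] at this
        simp only [Complex.add_im, Complex.neg_im, Complex.mul_im, Complex.zero_im] at this
        linarith
      have rC : -(q0.re^2 + q0.im^2) + (q1.re^2 + q1.im^2) + (q2.re^2 + q2.im^2) +
          (q3.re^2 + q3.im^2) = 0 := by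
        have := congrArg Complex.re KeyCon0
        simp only [Complex.add_re, Complex.neg_re, Complex.mul_re, Complex.conj_re,
          Complex.conj_im, Complex.zero_re] at this
        nlinarith [this]
      have rxi : ξ 0 * q0.re + ξ 1 * q1.re + ξ 2 * q2.re + ξ 3 * q3.re = 0 := by
        have := congrArg Complex.re Keyxi
        simp only [Complex.add_re, Complex.mul_re, Complex.ofReal_re, Complex.ofReal_im,
          Complex.zero_re] at this
        linarith
      have ixi : ξ 0 * q0.im + ξ 1 * q1.im + ξ 2 * q2.im + ξ 3 * q3.im = 0 := by
        have := congrArg Complex.im Keyxi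
        simp only [Complex.add_im, Complex.mul_im, Complex.ofReal_re, Complex.ofReal_im,
          Complex.zero_im] at this
        linarith
      have hu : q1.re^2 + q2.re^2 + q3.re^2 = q0.re^2 := by linarith
      have hv : q1.im^2 + q2.im^2 + q3.im^2 = q0.im^2 := by linarith
      -- proportionality: t * q_k = -q0 * x_k
      have squ : (ξ 0 * q1.re + q0.re * ξ 1)^2 + (ξ 0 * q2.re + q0.re * ξ 2)^2 +
          (ξ 0 * q3.re + q0.re * ξ 3)^2 = 0 := by
        linear_combination (ξ 0)^2 * hu + (2 * ξ 0 * q0.re) * rxi - q0.re^2 * hNr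
      have sqv : (ξ 0 * q1.im + q0.im * ξ 1)^2 + (ξ 0 * q2.im + q0.im * ξ 2)^2 +
          (ξ 0 * q3.im + q0.im * ξ 3)^2 = 0 := by
        linear_combination (ξ 0)^2 * hv + (2 * ξ 0 * q0.im) * ixi - q0.im^2 * hNr
      have e1 : ξ 0 * q1.re + q0.re * ξ 1 = 0 := by
        nlinarith [sq_nonneg (ξ 0 * q1.re + q0.re * ξ 1), sq_nonneg (ξ 0 * q2.re + q0.re * ξ 2),
          sq_nonneg (ξ 0 * q3.re + q0.re * ξ 3)]
      have e2 : ξ 0 * q2.re + q0.re * ξ 2 = 0 := by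
        nlinarith [sq_nonneg (ξ 0 * q1.re + q0.re * ξ 1), sq_nonneg (ξ 0 * q2.re + q0.re * ξ 2),
          sq_nonneg (ξ 0 * q3.re + q0.re * ξ 3)]
      have e3 : ξ 0 * q3.re + q0.re * ξ 3 = 0 := by
        nlinarith [sq_nonneg (ξ 0 * q1.re + q0.re * ξ 1), sq_nonneg (ξ 0 * q2.re + q0.re * ξ 2),
          sq_nonneg (ξ 0 * q3.re + q0.re * ξ 3)]
      have f1 : ξ 0 * q1.im + q0.im * ξ 1 = 0 := by
        nlinarith [sq_nonneg (ξ 0 * q1.im + q0.im * ξ 1), sq_nonneg (ξ 0 * q2.im + q0.im * ξ 2),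
          sq_nonneg (ξ 0 * q3.im + q0.im * ξ 3)]
      have f2 : ξ 0 * q2.im + q0.im * ξ 2 = 0 := by
        nlinarith [sq_nonneg (ξ 0 * q1.im + q0.im * ξ 1), sq_nonneg (ξ 0 * q2.im + q0.im * ξ 2),
          sq_nonneg (ξ 0 * q3.im + q0.im * ξ 3)]
      have f3 : ξ 0 * q3.im + q0.im * ξ 3 = 0 := by
        nlinarith [sq_nonneg (ξ 0 * q1.im + q0.im * ξ 1), sq_nonneg (ξ 0 * q2.im + q0.im * ξ 2),
          sq_nonneg (ξ 0 * q3.im + q0.im * ξ 3)]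
      have P1 : (ξ 0 : ℂ) * q1 = -(q0 * (ξ 1 : ℂ)) := by
        apply Complex.ext <;>
          simp only [Complex.mul_re, Complex.mul_im, Complex.neg_re, Complex.neg_im,
            Complex.ofReal_re, Complex.ofReal_im] <;> nlinarith [e1, f1]
      have P2 : (ξ 0 : ℂ) * q2 = -(q0 * (ξ 2 : ℂ)) := by
        apply Complex.ext <;>
          simp only [Complex.mul_re, Complex.mul_im, Complex.neg_re, Complex.neg_im,
            Complex.ofReal_re, Complex.ofReal_im] <;> nlinarith [e2, f2]
      have P3 : (ξ 0 : ℂ) * q3 = -(q0 * (ξ 3 : ℂ)) := by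
        apply Complex.ext <;>
          simp only [Complex.mul_re, Complex.mul_im, Complex.neg_re, Complex.neg_im,
            Complex.ofReal_re, Complex.ofReal_im] <;> nlinarith [e3, f3]
      have Iq : q1 * F 0 1 + q2 * F 0 2 + q3 * F 0 3 = (ξ 0 : ℂ) * R^2 := by
        rw [hq1f, hq2f, hq3f]
        linear_combination (ξ 0 : ℂ) * hE
      have hq0sq : q0^2 = (ξ 0 : ℂ)^2 * R^2 := by
        linear_combination (ξ 0 : ℂ) * Iq - F 0 1 * P1 - F 0 2 * P2 - F 0 3 * P3 + q0 * hq0f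
      have hcq : (b * q0)^2 = (ξ 0 : ℂ)^2 * (starRingEnd ℂ) R^2 := by
        have h := congrArg (starRingEnd ℂ) hq0sq
        simp only [map_mul, map_pow, Complex.conj_ofReal] at h
        rw [hb0] at h
        exact h
      have h4 : (ξ 0 : ℂ)^2 * (starRingEnd ℂ) R^2 * (a^2 - 1) = 0 := by
        linear_combination hcq - b^2 * hq0sq -
          (ξ 0 : ℂ)^2 * (b * R + a * (starRingEnd ℂ) R) * hbR
      have htC : (ξ 0 : ℂ) ≠ 0 := Complex.ofReal_ne_zero.mpr ht
      rcases mul_eq_zero.mp h4 with h | h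
      · rcases mul_eq_zero.mp h with h' | h'
        · exact absurd ((pow_eq_zero_iff (by norm_num)).mp h') htC
        · exact absurd ((pow_eq_zero_iff (by norm_num)).mp h') hconjRne
      · linear_combination h
    · -- non-null case
      have key2 : b^2 * (((ξ 0 : ℂ)^2 - (ξ 1 : ℂ)^2 - (ξ 2 : ℂ)^2 - (ξ 3 : ℂ)^2) * R^2) =
          ((ξ 0 : ℂ)^2 - (ξ 1 : ℂ)^2 - (ξ 2 : ℂ)^2 - (ξ 3 : ℂ)^2) * (starRingEnd ℂ) R ^ 2 := by
        have h := congrArg (starRingEnd ℂ) KeyS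
        simp only [map_add, map_neg, map_mul, map_pow, map_sub, map_ofNat,
          Complex.conj_ofReal] at h
        rw [hb0, hb1, hb2, hb3] at h
        linear_combination h - b^2 * KeyS
      have h3 : ((ξ 0 : ℂ)^2 - (ξ 1 : ℂ)^2 - (ξ 2 : ℂ)^2 - (ξ 3 : ℂ)^2) *
          (starRingEnd ℂ) R ^ 2 * (a^2 - 1) = 0 := by
        linear_combination (-(((ξ 0 : ℂ)^2 - (ξ 1 : ℂ)^2 - (ξ 2 : ℂ)^2 - (ξ 3 : ℂ)^2)) *
          (b * R + a * (starRingEnd ℂ) R)) * hbR + key2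
      rcases mul_eq_zero.mp h3 with h | h
      · rcases mul_eq_zero.mp h with h' | h'
        · exact absurd h' hNC
        · exact absurd ((pow_eq_zero_iff (by norm_num)).mp h') hconjRne
      · linear_combination h
  have hfin : a = 1 ∨ a = -1 := by
    rcases mul_eq_zero.mp (show (a - 1) * (a + 1) = 0 by linear_combination ha2) with h | h
    · exact Or.inl (by linear_combination h)
    · exact Or.inr (by linear_combination h)
  refine ⟨?_, Or.inr hfin⟩
  rcases hfin with rfl | rfl <;> simp
end
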